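/- arXiv:1803.10545 — 13 statements merged into one kernel-verified Lean document; each statement's English description precedes it below -/
import Mathlib

section
/- Let (V,𝓑) be a (v,k,1)-BIBD containing a proper sub-BIBD on a vertex set V' of size v'. Then v ≥ (k−1)v' + 1. -/
theorem stmt3
    {alpha : Type*} [DecidableEq alpha] (V : Finset alpha) (B : Finset (Finset alpha))
    (v k : ℕ) (hk : 2 < k) (hV : V.card = v)
    (hB : ∀ b ∈ B, b ⊆ V ∧ b.card = k)
    (hpair : ∀ x ∈ V, ∀ y ∈ V, x ≠ y → (B.filter fun b => x ∈ b ∧ y ∈ b).card = 1)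
    (V' : Finset alpha) (B' : Finset (Finset alpha)) (v' : ℕ)
    (hV'sub : V' ⊆ V) (hv' : V'.card = v') (hB'sub : B' ⊆ B)
    (hB'V : ∀ b ∈ B', b ⊆ V')
    (hpair' : ∀ x ∈ V', ∀ y ∈ V', x ≠ y →
      (B'.filter fun b => x ∈ b ∧ y ∈ b).card = 1)
    (hproper : V' ≠ V) (hne : B'.Nonempty) :
    (k - 1) * v' + 1 ≤ v := by
  -- pick p ∈ V \ V'
  obtain ⟨p, hpV, hpV'⟩ := Finset.exists_of_ssubset (lt_of_le_of_ne hV'sub hproper)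
  -- uniqueness of blocks through two points
  have hkey : ∀ x y : alpha, x ∈ V → y ∈ V → x ≠ y → ∀ b c, b ∈ B → c ∈ B →
      x ∈ b → y ∈ b → x ∈ c → y ∈ c → b = c := by
    intro x y hx hy hxy b c hb hc hxb hyb hxc hyc
    obtain ⟨d, hd⟩ := Finset.card_eq_one.mp (hpair x hx y hy hxy)
    have h1 : b ∈ Finset.filter (fun b => x ∈ b ∧ y ∈ b) B :=
      Finset.mem_filter.mpr ⟨hb, hxb, hyb⟩
    have h2 : c ∈ Finset.filter (fun b => x ∈ b ∧ y ∈ b) B :=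
      Finset.mem_filter.mpr ⟨hc, hxc, hyc⟩
    rw [hd, Finset.mem_singleton] at h1 h2
    rw [h1, h2]
  -- any block through p meets V' in at most one point
  have hint : ∀ b ∈ B, p ∈ b → (b ∩ V').card ≤ 1 := by
    intro b hb hpb
    by_contra h
    obtain ⟨x, hx, y, hy, hxy⟩ := Finset.one_lt_card.mp (by omega : 1 < (b ∩ V').card)
    obtain ⟨hxb, hxV'⟩ := Finset.mem_inter.mp hx
    obtain ⟨hyb, hyV'⟩ := Finset.mem_inter.mp hy
    have h1 := hpair' x hxV' y hyV' hxy
    have hne1 : (B'.filter fun b => x ∈ b ∧ y ∈ b).Nonempty :=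
      Finset.card_pos.mp (by omega)
    obtain ⟨b', hb'⟩ := hne1
    obtain ⟨hb'B', hxb', hyb'⟩ := Finset.mem_filter.mp hb'
    have hbb' : b = b' := hkey x y (hV'sub hxV') (hV'sub hyV') hxy b b' hb
      (hB'sub hb'B') hxb hyb hxb' hyb'
    exact hpV' (hB'V b' hb'B' (hbb' ▸ hpb))
  -- choose the block through p and x for each x ∈ V'
  have hex : ∀ x : alpha, ∃ b, x ∈ V' → b ∈ B ∧ p ∈ b ∧ x ∈ b := by
    intro x
    by_cases hx : x ∈ V'
    · have hpx : p ≠ x := fun h => hpV' (h ▸ hx)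
      have := hpair p hpV x (hV'sub hx) hpx
      obtain ⟨b, hb⟩ := Finset.card_pos.mp (by omega : 0 < (B.filter fun b => p ∈ b ∧ x ∈ b).card)
      obtain ⟨hbB, hpb, hxb⟩ := Finset.mem_filter.mp hb
      exact ⟨b, fun _ => ⟨hbB, hpb, hxb⟩⟩
    · exact ⟨∅, fun h => absurd h hx⟩
  choose blk hblk using hex
  set f : alpha → Finset alpha := fun x => blk x \ insert p V' with hf
  -- pieces are pairwise disjoint
  have hdisj : ∀ x ∈ V', ∀ y ∈ V', x ≠ y → Disjoint (f x) (f y) := by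
    intro x hx y hy hxy
    rw [Finset.disjoint_left]
    intro z hzx hzy
    obtain ⟨hzbx, hznotin⟩ := Finset.mem_sdiff.mp hzx
    obtain ⟨hzby, _⟩ := Finset.mem_sdiff.mp hzy
    obtain ⟨hbxB, hpbx, hxbx⟩ := hblk x hx
    obtain ⟨hbyB, hpby, hyby⟩ := hblk y hy
    have hzp : p ≠ z := fun h => hznotin (h ▸ Finset.mem_insert_self p V')
    have hzV : z ∈ V := (hB _ hbxB).1 hzbx
    have heq : blk x = blk y := hkey p z hpV hzV hzp _ _ hbxB hbyB hpbx hzbx hpby hzby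
    -- then blk x contains x and y, both in V', contradicting hint
    have hxy2 : 1 < (blk x ∩ V').card := by
      apply Finset.one_lt_card.mpr
      exact ⟨x, Finset.mem_inter.mpr ⟨hxbx, hx⟩, y,
        Finset.mem_inter.mpr ⟨heq ▸ hyby, hy⟩, hxy⟩
    exact absurd (hint _ hbxB hpbx) (by omega)
  -- each piece has at least k-2 elements
  have hcard : ∀ x ∈ V', k - 2 ≤ (f x).card := by
    intro x hx
    obtain ⟨hbxB, hpbx, hxbx⟩ := hblk x hx
    have hk' := (hB _ hbxB).2
    have h1 : (f x).card + (blk x ∩ insert p V').card = (blk x).card :=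
      Finset.card_sdiff_add_card_inter _ _
    have h2 : blk x ∩ insert p V' ⊆ insert p (blk x ∩ V') := by
      intro z hz
      obtain ⟨hz1, hz2⟩ := Finset.mem_inter.mp hz
      rcases Finset.mem_insert.mp hz2 with h | h
      · exact Finset.mem_insert.mpr (Or.inl h)
      · exact Finset.mem_insert.mpr (Or.inr (Finset.mem_inter.mpr ⟨hz1, h⟩))
    have h3 : (blk x ∩ insert p V').card ≤ (blk x ∩ V').card + 1 :=
      le_trans (Finset.card_le_card h2) (Finset.card_insert_le _ _)
    have h4 := hint _ hbxB hpbx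
    omega
  -- the big disjoint union
  set T : Finset alpha := V'.biUnion f with hT
  have hTcard : v' * (k - 2) ≤ T.card := by
    rw [hT, Finset.card_biUnion hdisj]
    calc v' * (k - 2) = ∑ _x ∈ V', (k - 2) := by
          rw [Finset.sum_const, hv', smul_eq_mul]
      _ ≤ ∑ x ∈ V', (f x).card := Finset.sum_le_sum hcard
  have hTsub : T ⊆ V := by
    intro z hz
    obtain ⟨x, hx, hzf⟩ := Finset.mem_biUnion.mp hz
    exact (hB _ (hblk x hx).1).1 (Finset.mem_sdiff.mp hzf).1
  have hTdisj : Disjoint T (insert p V') := by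
    rw [Finset.disjoint_left]
    intro z hz hz2
    obtain ⟨x, hx, hzf⟩ := Finset.mem_biUnion.mp hz
    exact (Finset.mem_sdiff.mp hzf).2 hz2
  have hsub2 : T ∪ insert p V' ⊆ V := by
    apply Finset.union_subset hTsub
    apply Finset.insert_subset hpV hV'sub
  have hfinal : T.card + (v' + 1) ≤ v := by
    have := Finset.card_le_card hsub2
    rw [Finset.card_union_of_disjoint hTdisj, Finset.card_insert_of_notMem hpV', hv', hV] at this
    omega
  obtain ⟨m, rfl⟩ : ∃ m, k = m + 3 := ⟨k - 3, by omega⟩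
  have h1 : m + 3 - 1 = m + 2 := rfl
  have h2 : m + 3 - 2 = m + 1 := rfl
  rw [h1]
  rw [h2] at hTcard
  have heq : (m + 2) * v' = v' * (m + 1) + v' := by ring
  linarith
end

section
/- Let (V,𝓑) be a (v,k,1)-BIBD with two sub-BIBDs (V₁,𝓑₁) and (V₂,𝓑₂). Then (V₁∩V₂, 𝓑₁∩𝓑₂) is also a sub-BIBD; moreover, setting v'=|V₁∩V₂|, either v'∈{0,1}, or v'=k and 𝓑₁∩𝓑₂ consists of a single block, or v'>k. -/
theorem stmt4
    {alpha : Type*} [DecidableEq alpha] (V : Finset alpha) (B : Finset (Finset alpha))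
    (v k : ℕ) (hk : 2 < k) (hV : V.card = v)
    (hB : ∀ b ∈ B, b ⊆ V ∧ b.card = k)
    (hpair : ∀ x ∈ V, ∀ y ∈ V, x ≠ y → (B.filter fun b => x ∈ b ∧ y ∈ b).card = 1)
    (V₁ V₂ : Finset alpha) (B₁ B₂ : Finset (Finset alpha))
    (hV₁ : V₁ ⊆ V) (hB₁ : B₁ ⊆ B) (hB₁V : ∀ b ∈ B₁, b ⊆ V₁)
    (hpair₁ : ∀ x ∈ V₁, ∀ y ∈ V₁, x ≠ y →
      (B₁.filter fun b => x ∈ b ∧ y ∈ b).card = 1)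
    (hV₂ : V₂ ⊆ V) (hB₂ : B₂ ⊆ B) (hB₂V : ∀ b ∈ B₂, b ⊆ V₂)
    (hpair₂ : ∀ x ∈ V₂, ∀ y ∈ V₂, x ≠ y →
      (B₂.filter fun b => x ∈ b ∧ y ∈ b).card = 1) :
    (∀ b ∈ B₁ ∩ B₂, b ⊆ V₁ ∩ V₂) ∧
    (∀ x ∈ V₁ ∩ V₂, ∀ y ∈ V₁ ∩ V₂, x ≠ y →
      ((B₁ ∩ B₂).filter fun b => x ∈ b ∧ y ∈ b).card = 1) ∧
    ((V₁ ∩ V₂).card = 0 ∨ (V₁ ∩ V₂).card = 1 ∨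
      ((V₁ ∩ V₂).card = k ∧ (B₁ ∩ B₂).card = 1) ∨ k < (V₁ ∩ V₂).card) := by
  have sub : ∀ b ∈ B₁ ∩ B₂, b ⊆ V₁ ∩ V₂ := by
    intro b hb
    rw [Finset.mem_inter] at hb
    exact Finset.subset_inter (hB₁V b hb.1) (hB₂V b hb.2)
  have key : ∀ x ∈ V₁ ∩ V₂, ∀ y ∈ V₁ ∩ V₂, x ≠ y →
      ((B₁ ∩ B₂).filter fun b => x ∈ b ∧ y ∈ b) = (B₁.filter fun b => x ∈ b ∧ y ∈ b) := by
    intro x hx y hy hxy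
    rw [Finset.mem_inter] at hx hy
    obtain ⟨b₁, hb₁⟩ := Finset.card_eq_one.mp (hpair₁ x hx.1 y hy.1 hxy)
    obtain ⟨b₂, hb₂⟩ := Finset.card_eq_one.mp (hpair₂ x hx.2 y hy.2 hxy)
    obtain ⟨b, hb⟩ := Finset.card_eq_one.mp (hpair x (hV₁ hx.1) y (hV₁ hy.1) hxy)
    have h1 : b₁ ∈ B₁ ∧ x ∈ b₁ ∧ y ∈ b₁ := by
      have := hb₁ ▸ Finset.mem_singleton_self b₁
      simpa using Finset.mem_filter.mp this
    have h2 : b₂ ∈ B₂ ∧ x ∈ b₂ ∧ y ∈ b₂ := by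
      have := hb₂ ▸ Finset.mem_singleton_self b₂
      simpa using Finset.mem_filter.mp this
    have e1 : b₁ = b := by
      have : b₁ ∈ B.filter fun c => x ∈ c ∧ y ∈ c :=
        Finset.mem_filter.mpr ⟨hB₁ h1.1, h1.2⟩
      rw [hb, Finset.mem_singleton] at this; exact this
    have e2 : b₂ = b := by
      have : b₂ ∈ B.filter fun c => x ∈ c ∧ y ∈ c :=
        Finset.mem_filter.mpr ⟨hB₂ h2.1, h2.2⟩
      rw [hb, Finset.mem_singleton] at this; exact this
    rw [hb₁]
    ext c
    simp only [Finset.mem_filter, Finset.mem_inter, Finset.mem_singleton]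
    constructor
    · rintro ⟨⟨hc1, hc2⟩, hxyc⟩
      have : c ∈ B₁.filter fun d => x ∈ d ∧ y ∈ d := Finset.mem_filter.mpr ⟨hc1, hxyc⟩
      rw [hb₁, Finset.mem_singleton] at this; exact this
    · rintro rfl
      exact ⟨⟨h1.1, e1 ▸ e2 ▸ h2.1⟩, h1.2⟩
  have pairInt : ∀ x ∈ V₁ ∩ V₂, ∀ y ∈ V₁ ∩ V₂, x ≠ y →
      ((B₁ ∩ B₂).filter fun b => x ∈ b ∧ y ∈ b).card = 1 := by
    intro x hx y hy hxy
    rw [key x hx y hy hxy]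
    exact hpair₁ x (Finset.mem_inter.mp hx).1 y (Finset.mem_inter.mp hy).1 hxy
  refine ⟨sub, pairInt, ?_⟩
  by_cases h01 : (V₁ ∩ V₂).card ≤ 1
  · interval_cases h : (V₁ ∩ V₂).card
    · exact Or.inl rfl
    · exact Or.inr (Or.inl rfl)
  · push_neg at h01
    obtain ⟨x, hx, y, hy, hxy⟩ := Finset.one_lt_card.mp h01
    obtain ⟨b, hbmem⟩ := Finset.card_eq_one.mp (pairInt x hx y hy hxy)
    have hbfilt := hbmem ▸ Finset.mem_singleton_self b
    rw [Finset.mem_filter] at hbfilt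
    have hbB : b ∈ B := hB₁ (Finset.mem_inter.mp hbfilt.1).1
    have hbk : b.card = k := (hB b hbB).2
    have hbsub : b ⊆ V₁ ∩ V₂ := sub b hbfilt.1
    have hkle : k ≤ (V₁ ∩ V₂).card := hbk ▸ Finset.card_le_card hbsub
    rcases lt_or_eq_of_le hkle with hlt | heq
    · exact Or.inr (Or.inr (Or.inr hlt))
    · refine Or.inr (Or.inr (Or.inl ⟨heq.symm, ?_⟩))
      have hbeq : b = V₁ ∩ V₂ := Finset.eq_of_subset_of_card_le hbsub (by omega)
      rw [Finset.card_eq_one]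
      refine ⟨b, ?_⟩
      ext c
      simp only [Finset.mem_singleton]
      constructor
      · intro hc
        have hcB : c ∈ B := hB₁ (Finset.mem_inter.mp hc).1
        have hck : c.card = k := (hB c hcB).2
        have hcsub : c ⊆ b := hbeq ▸ sub c hc
        exact Finset.eq_of_subset_of_card_le hcsub (by omega)
      · rintro rfl; exact hbfilt.1
end

section
/- Let (V,𝓑) be a (v,k,1)-BIBD with a collection 𝓓 of well-distributed minimal (v',k,1)-sub-BIBDs, with every block of 𝓑 contained in exactly m members of 𝓓. Then (V,𝓓), with each subdesign viewed as its vertex set, is a (v,v',m)-BIBD: every pair of distinct vertices of V is contained in exactly m members of 𝓓. -/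
def IsSubdesign {alpha : Type*} [DecidableEq alpha] (B : Finset (Finset alpha))
    (W : Finset alpha) : Prop :=
  ∀ x ∈ W, ∀ y ∈ W, x ≠ y → ∃ b ∈ B, x ∈ b ∧ y ∈ b ∧ b ⊆ W

theorem stmt5
    {alpha : Type*} [DecidableEq alpha] (V : Finset alpha) (B : Finset (Finset alpha))
    (D : Finset (Finset alpha)) (v k v' l m : ℕ)
    (hk : 2 < k) (hk' : k < v') (hV : V.card = v)
    (hB : ∀ b ∈ B, b ⊆ V ∧ b.card = k)
    (hpair : ∀ x ∈ V, ∀ y ∈ V, x ≠ y → (B.filter fun b => x ∈ b ∧ y ∈ b).card = 1)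
    (hDne : D.Nonempty)
    (hD : ∀ d ∈ D, d ⊆ V ∧ d.card = v' ∧ IsSubdesign B d)
    (hmin : ∀ W ⊆ V, IsSubdesign B W → k < W.card → v' ≤ W.card)
    (hall : ∀ W ⊆ V, IsSubdesign B W → W.card = v' → W ∈ D)
    (hl : ∀ x ∈ V, (D.filter fun d => x ∈ d).card = l)
    (hm : ∀ b ∈ B, (D.filter fun d => b ⊆ d).card = m) :
    ∀ x ∈ V, ∀ y ∈ V, x ≠ y →
      (D.filter fun d => x ∈ d ∧ y ∈ d).card = m := by
  intro x hx y hy hxy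
  obtain ⟨b, hb⟩ := Finset.card_eq_one.mp (hpair x hx y hy hxy)
  have hbmem : b ∈ B ∧ x ∈ b ∧ y ∈ b := by
    have : b ∈ B.filter fun b => x ∈ b ∧ y ∈ b := hb ▸ Finset.mem_singleton_self b
    simpa using this
  obtain ⟨hbB, hxb, hyb⟩ := hbmem
  have : (D.filter fun d => x ∈ d ∧ y ∈ d) = D.filter fun d => b ⊆ d := by
    apply Finset.filter_congr
    intro d hd
    constructor
    · rintro ⟨hxd, hyd⟩
      obtain ⟨b', hb'B, hxb', hyb', hb'd⟩ := (hD d hd).2.2 x hxd y hyd hxy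
      have : b' ∈ B.filter fun b => x ∈ b ∧ y ∈ b := Finset.mem_filter.mpr ⟨hb'B, hxb', hyb'⟩
      rw [hb, Finset.mem_singleton] at this
      exact this ▸ hb'd
    · intro hbd
      exact ⟨hbd hxb, hbd hyb⟩
  rw [this]
  exact hm b hbB
end

section
/- Let (V,𝓑) be a (v,k,1)-BIBD with well-distributed minimal (v',k,1)-sub-BIBDs, where every block lies in m subdesigns. Then the pairwise intersection of any two distinct minimal subdesigns (as vertex sets) has size 0, 1, or k; any intersection of more than m of them has size at most 1; and any intersection of more than l of them is empty, where l is the number of subdesigns through each vertex. -/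
theorem stmt6
    {alpha : Type*} [DecidableEq alpha] (V : Finset alpha) (B : Finset (Finset alpha))
    (D : Finset (Finset alpha)) (v k v' l m : ℕ)
    (hk : 2 < k) (hk' : k < v') (hV : V.card = v)
    (hB : ∀ b ∈ B, b ⊆ V ∧ b.card = k)
    (hpair : ∀ x ∈ V, ∀ y ∈ V, x ≠ y → (B.filter fun b => x ∈ b ∧ y ∈ b).card = 1)
    (hDne : D.Nonempty)
    (hD : ∀ d ∈ D, d ⊆ V ∧ d.card = v' ∧ IsSubdesign B d)
    (hmin : ∀ W ⊆ V, IsSubdesign B W → k < W.card → v' ≤ W.card)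
    (hall : ∀ W ⊆ V, IsSubdesign B W → W.card = v' → W ∈ D)
    (hl : ∀ x ∈ V, (D.filter fun d => x ∈ d).card = l)
    (hm : ∀ b ∈ B, (D.filter fun d => b ⊆ d).card = m) :
    (∀ d₁ ∈ D, ∀ d₂ ∈ D, d₁ ≠ d₂ →
      (d₁ ∩ d₂).card = 0 ∨ (d₁ ∩ d₂).card = 1 ∨ (d₁ ∩ d₂).card = k) ∧
    (∀ S ⊆ D, m < S.card → (V.filter fun x => ∀ d ∈ S, x ∈ d).card ≤ 1) ∧
    (∀ S ⊆ D, l < S.card → (V.filter fun x => ∀ d ∈ S, x ∈ d) = ∅) := by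
  have hub : ∀ x ∈ V, ∀ y ∈ V, x ≠ y → ∀ b₁ ∈ B, ∀ b₂ ∈ B,
      x ∈ b₁ → y ∈ b₁ → x ∈ b₂ → y ∈ b₂ → b₁ = b₂ := by
    intro x hx y hy hxy b₁ hb₁ b₂ hb₂ h1 h2 h3 h4
    have h := hpair x hx y hy hxy
    have m1 : b₁ ∈ B.filter fun b => x ∈ b ∧ y ∈ b := Finset.mem_filter.2 ⟨hb₁, h1, h2⟩
    have m2 : b₂ ∈ B.filter fun b => x ∈ b ∧ y ∈ b := Finset.mem_filter.2 ⟨hb₂, h3, h4⟩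
    obtain ⟨c, hc⟩ := Finset.card_eq_one.1 h
    rw [hc, Finset.mem_singleton] at m1 m2
    rw [m1, m2]
  refine ⟨?_, ?_, ?_⟩
  · intro d₁ hd₁ d₂ hd₂ hne
    obtain ⟨hd₁V, hd₁c, hd₁s⟩ := hD d₁ hd₁
    obtain ⟨hd₂V, hd₂c, hd₂s⟩ := hD d₂ hd₂
    by_cases h2 : (d₁ ∩ d₂).card ≤ 1
    · omega
    push_neg at h2
    have hIV : d₁ ∩ d₂ ⊆ V := (Finset.inter_subset_left).trans hd₁V
    have hIsub : IsSubdesign B (d₁ ∩ d₂) := by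
      intro a ha b hb hab
      obtain ⟨ha1, ha2⟩ := Finset.mem_inter.1 ha
      obtain ⟨hb1, hb2⟩ := Finset.mem_inter.1 hb
      obtain ⟨c₁, hc₁B, hac₁, hbc₁, hc₁s⟩ := hd₁s a ha1 b hb1 hab
      obtain ⟨c₂, hc₂B, hac₂, hbc₂, hc₂s⟩ := hd₂s a ha2 b hb2 hab
      have : c₁ = c₂ := hub a (hd₁V ha1) b (hd₁V hb1) hab c₁ hc₁B c₂ hc₂B hac₁ hbc₁ hac₂ hbc₂
      exact ⟨c₁, hc₁B, hac₁, hbc₁, Finset.subset_inter hc₁s (this ▸ hc₂s)⟩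
    obtain ⟨x, hx, y, hy, hxy⟩ := Finset.one_lt_card.1 h2
    obtain ⟨b, hbB, hxb, hyb, hbs⟩ := hIsub x hx y hy hxy
    have hk_le : k ≤ (d₁ ∩ d₂).card := (hB b hbB).2 ▸ Finset.card_le_card hbs
    rcases eq_or_lt_of_le hk_le with h | h
    · omega
    · exfalso
      have hv' := hmin _ hIV hIsub h
      have h1 : (d₁ ∩ d₂).card ≤ v' := hd₁c ▸ Finset.card_le_card Finset.inter_subset_left
      have hI1 : d₁ ∩ d₂ = d₁ :=
        Finset.eq_of_subset_of_card_le Finset.inter_subset_left (by omega)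
      have hI2 : d₁ ∩ d₂ = d₂ :=
        Finset.eq_of_subset_of_card_le Finset.inter_subset_right (by omega)
      exact hne (hI1 ▸ hI2)
  · intro S hS hmS
    by_contra h
    push_neg at h
    obtain ⟨x, hx, y, hy, hxy⟩ := Finset.one_lt_card.1 h
    obtain ⟨hxV, hxd⟩ := Finset.mem_filter.1 hx
    obtain ⟨hyV, hyd⟩ := Finset.mem_filter.1 hy
    obtain ⟨d₀, hd₀⟩ := Finset.card_pos.1 (Nat.lt_of_le_of_lt (Nat.zero_le m) hmS)
    obtain ⟨_, _, hd₀s⟩ := hD d₀ (hS hd₀)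
    obtain ⟨b, hbB, hxb, hyb, _⟩ := hd₀s x (hxd d₀ hd₀) y (hyd d₀ hd₀) hxy
    have hsub : S ⊆ D.filter fun d => b ⊆ d := by
      intro d hd
      obtain ⟨_, _, hds⟩ := hD d (hS hd)
      obtain ⟨b', hb'B, hxb', hyb', hb's⟩ := hds x (hxd d hd) y (hyd d hd) hxy
      have : b' = b := hub x hxV y hyV hxy b' hb'B b hbB hxb' hyb' hxb hyb
      exact Finset.mem_filter.2 ⟨hS hd, this ▸ hb's⟩
    have := Finset.card_le_card hsub
    rw [hm b hbB] at this
    omega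
  · intro S hS hlS
    by_contra h
    obtain ⟨x, hx⟩ := Finset.nonempty_iff_ne_empty.2 h
    obtain ⟨hxV, hxd⟩ := Finset.mem_filter.1 hx
    have hsub : S ⊆ D.filter fun d => x ∈ d := fun d hd =>
      Finset.mem_filter.2 ⟨hS hd, hxd d hd⟩
    have := Finset.card_le_card hsub
    rw [hl x hxV] at this
    omega
end

section
/- Let (V,𝓑) be a (v,k,1)-BIBD with well-distributed minimal (v',k,1)-sub-BIBDs. Fix a minimal subdesign V₁ and a vertex x ∈ V₁. Then the number of minimal subdesigns V₂ with V₁ ∩ V₂ = {x} equals m((v−1)/(v'−1) − (v'−1)/(k−1)) + (v'−k)/(k−1). -/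
theorem stmt10
    {alpha : Type*} [DecidableEq alpha] (V : Finset alpha) (B : Finset (Finset alpha))
    (D : Finset (Finset alpha)) (v k v' l m : ℕ)
    (hk : 2 < k) (hk' : k < v') (hV : V.card = v)
    (hB : ∀ b ∈ B, b ⊆ V ∧ b.card = k)
    (hpair : ∀ x ∈ V, ∀ y ∈ V, x ≠ y → (B.filter fun b => x ∈ b ∧ y ∈ b).card = 1)
    (hDne : D.Nonempty)
    (hD : ∀ d ∈ D, d ⊆ V ∧ d.card = v' ∧ IsSubdesign B d)
    (hmin : ∀ W ⊆ V, IsSubdesign B W → k < W.card → v' ≤ W.card)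
    (hall : ∀ W ⊆ V, IsSubdesign B W → W.card = v' → W ∈ D)
    (hl : ∀ x ∈ V, (D.filter fun d => x ∈ d).card = l)
    (hm : ∀ b ∈ B, (D.filter fun d => b ⊆ d).card = m)
    (V₁ : Finset alpha) (hV₁ : V₁ ∈ D) (x : alpha) (hx : x ∈ V₁) :
    ((D.filter fun d => V₁ ∩ d = {x}).card : ℚ)
      = m * (((v : ℚ) - 1) / ((v' : ℚ) - 1) - ((v' : ℚ) - 1) / ((k : ℚ) - 1))
        + ((v' : ℚ) - k) / ((k : ℚ) - 1) := by
  classical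
  obtain ⟨hV₁V, hV₁card, hV₁sub⟩ := hD V₁ hV₁
  have hxV : x ∈ V := hV₁V hx
  -- uniqueness of the block through two points
  have huniq : ∀ u w : alpha, u ∈ V → w ∈ V → u ≠ w → ∀ b₁ ∈ B, ∀ b₂ ∈ B,
      u ∈ b₁ ∧ w ∈ b₁ → u ∈ b₂ ∧ w ∈ b₂ → b₁ = b₂ := by
    intro u w hu hw huw b₁ hb₁ b₂ hb₂ h1 h2
    obtain ⟨b, hb⟩ := Finset.card_eq_one.mp (hpair u hu w hw huw)
    have m1 : b₁ ∈ B.filter (fun b => u ∈ b ∧ w ∈ b) := Finset.mem_filter.mpr ⟨hb₁, h1⟩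
    have m2 : b₂ ∈ B.filter (fun b => u ∈ b ∧ w ∈ b) := Finset.mem_filter.mpr ⟨hb₂, h2⟩
    rw [hb, Finset.mem_singleton] at m1 m2
    rw [m1, m2]
  -- existence of a block through two points
  have hexists : ∀ u w : alpha, u ∈ V → w ∈ V → u ≠ w → ∃ b ∈ B, u ∈ b ∧ w ∈ b := by
    intro u w hu hw huw
    obtain ⟨b, hb⟩ := Finset.card_eq_one.mp (hpair u hu w hw huw)
    have hbm : b ∈ B.filter (fun b => u ∈ b ∧ w ∈ b) := hb ▸ Finset.mem_singleton_self b
    rw [Finset.mem_filter] at hbm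
    exact ⟨b, hbm.1, hbm.2⟩
  -- a block through two points of a subdesign lies in it
  have hblk : ∀ d ∈ D, ∀ u ∈ d, ∀ w ∈ d, u ≠ w → ∀ b ∈ B, u ∈ b → w ∈ b → b ⊆ d := by
    intro d hd u hu w hw huw b hb hub hwb
    obtain ⟨hdV, _, hdsub⟩ := hD d hd
    obtain ⟨b', hb', hub', hwb', hb'd⟩ := hdsub u hu w hw huw
    have hbe := huniq u w (hdV hu) (hdV hw) huw b hb b' hb' ⟨hub, hwb⟩ ⟨hub', hwb'⟩
    exact hbe ▸ hb'd
  set Bx := B.filter (fun b => x ∈ b ∧ b ⊆ V₁) with hBxdef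
  set r := Bx.card with hrdef
  -- blocks of V₁ through x partition V₁ \ {x}
  have hcover : V₁.erase x = Bx.biUnion (fun b => b.erase x) := by
    ext y
    simp only [Bx, Finset.mem_erase, Finset.mem_biUnion, Finset.mem_filter]
    constructor
    · rintro ⟨hyx, hyV₁⟩
      obtain ⟨b, hbB, hxb, hyb⟩ := hexists x y hxV (hV₁V hyV₁) (Ne.symm hyx)
      have hbV₁ : b ⊆ V₁ := hblk V₁ hV₁ x hx y hyV₁ (Ne.symm hyx) b hbB hxb hyb
      exact ⟨b, ⟨hbB, hxb, hbV₁⟩, hyx, hyb⟩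
    · rintro ⟨b, ⟨hbB, hxb, hbV₁⟩, hyx, hyb⟩
      exact ⟨hyx, hbV₁ hyb⟩
  have hdisjBx : ∀ b₁ ∈ Bx, ∀ b₂ ∈ Bx, b₁ ≠ b₂ → Disjoint (b₁.erase x) (b₂.erase x) := by
    intro b₁ hb₁ b₂ hb₂ hne
    rw [Finset.disjoint_left]
    intro y hy1 hy2
    rw [hBxdef, Finset.mem_filter] at hb₁ hb₂
    obtain ⟨hy1x, hy1b⟩ := Finset.mem_erase.mp hy1
    obtain ⟨_, hy2b⟩ := Finset.mem_erase.mp hy2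
    exact hne (huniq x y hxV (hV₁V (hb₁.2.2 hy1b)) (Ne.symm hy1x) b₁ hb₁.1 b₂ hb₂.1
      ⟨hb₁.2.1, hy1b⟩ ⟨hb₂.2.1, hy2b⟩)
  have hre : v' - 1 = r * (k - 1) := by
    calc v' - 1 = (V₁.erase x).card := by rw [Finset.card_erase_of_mem hx, hV₁card]
      _ = ∑ b ∈ Bx, (b.erase x).card := by rw [hcover]; exact Finset.card_biUnion hdisjBx
      _ = ∑ _b ∈ Bx, (k - 1) := Finset.sum_congr rfl (fun b hb => by
            rw [hBxdef, Finset.mem_filter] at hb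
            rw [Finset.card_erase_of_mem hb.2.1, (hB b hb.1).2])
      _ = r * (k - 1) := by rw [Finset.sum_const, smul_eq_mul]
  -- the pair count : for y ≠ x, #{d ∈ D : x ∈ d ∧ y ∈ d} = m
  have hpairD : ∀ y ∈ V.erase x, (D.filter (fun d => x ∈ d ∧ y ∈ d)).card = m := by
    intro y hy
    obtain ⟨hyx, hyV⟩ := Finset.mem_erase.mp hy
    obtain ⟨b, hbB, hxb, hyb⟩ := hexists x y hxV hyV (Ne.symm hyx)
    have : D.filter (fun d => x ∈ d ∧ y ∈ d) = D.filter (fun d => b ⊆ d) := by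
      apply Finset.filter_congr
      intro d hd
      constructor
      · rintro ⟨hxd, hyd⟩
        exact hblk d hd x hxd y hyd (Ne.symm hyx) b hbB hxb hyb
      · intro hbd
        exact ⟨hbd hxb, hbd hyb⟩
    rw [this]
    exact hm b hbB
  set S := D.filter (fun d => x ∈ d) with hSdef
  have hScard : S.card = l := hl x hxV
  -- double count: l * (v'-1) = (v-1) * m
  have he3 : l * (v' - 1) = (v - 1) * m := by
    have step1 : ∑ d ∈ S, (d.erase x).card = l * (v' - 1) := by
      have hc : ∀ d ∈ S, (d.erase x).card = v' - 1 := by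
        intro d hd
        rw [hSdef, Finset.mem_filter] at hd
        rw [Finset.card_erase_of_mem hd.2, (hD d hd.1).2.1]
      rw [Finset.sum_congr rfl hc, Finset.sum_const, smul_eq_mul, hScard]
    have step2 : ∑ d ∈ S, (d.erase x).card
        = ∑ y ∈ V.erase x, (S.filter (fun d => y ∈ d)).card := by
      have hrw : ∀ d ∈ S, (d.erase x).card = ((V.erase x).filter (fun y => y ∈ d)).card := by
        intro d hd
        rw [hSdef, Finset.mem_filter] at hd
        congr 1
        ext y
        simp only [Finset.mem_erase, Finset.mem_filter]
        exact ⟨fun ⟨h1, h2⟩ => ⟨⟨h1, (hD d hd.1).1 h2⟩, h2⟩, fun ⟨⟨h1, _⟩, h2⟩ => ⟨h1, h2⟩⟩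
      rw [Finset.sum_congr rfl hrw]
      simp only [Finset.card_filter]
      exact Finset.sum_comm
    have step3 : ∑ y ∈ V.erase x, (S.filter (fun d => y ∈ d)).card = (v - 1) * m := by
      have hrw : ∀ y ∈ V.erase x, (S.filter (fun d => y ∈ d)).card = m := by
        intro y hy
        rw [hSdef, Finset.filter_filter]
        exact hpairD y hy
      rw [Finset.sum_congr rfl hrw, Finset.sum_const, smul_eq_mul,
        Finset.card_erase_of_mem hxV, hV]
    rw [← step1, step2, step3]
  -- the structural lemma: intersections are x alone or a block of V₁ through x
  have hstruct : ∀ d ∈ D, d ≠ V₁ → x ∈ d → V₁ ∩ d ≠ {x} → V₁ ∩ d ∈ Bx := by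
    intro d hd hne hxd hnsing
    obtain ⟨hdV, hdcard, hdsub⟩ := hD d hd
    have hxI : x ∈ V₁ ∩ d := Finset.mem_inter.mpr ⟨hx, hxd⟩
    have hIV₁ : V₁ ∩ d ⊆ V₁ := Finset.inter_subset_left
    have hIV : V₁ ∩ d ⊆ V := fun z hz => hV₁V (hIV₁ hz)
    obtain ⟨y, hyI, hyx⟩ : ∃ y ∈ V₁ ∩ d, y ≠ x := by
      by_contra hcon
      push_neg at hcon
      apply hnsing
      apply Finset.Subset.antisymm
      · intro z hz
        rw [Finset.mem_singleton]
        exact hcon z hz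
      · exact Finset.singleton_subset_iff.mpr hxI
    obtain ⟨b, hbB, hxb, hyb⟩ := hexists x y hxV (hIV hyI) (Ne.symm hyx)
    have hbV₁ : b ⊆ V₁ := hblk V₁ hV₁ x hx y (hIV₁ hyI) (Ne.symm hyx) b hbB hxb hyb
    have hbd : b ⊆ d := hblk d hd x hxd y (Finset.mem_inter.mp hyI).2 (Ne.symm hyx) b hbB hxb hyb
    have hbI : b ⊆ V₁ ∩ d := Finset.subset_inter hbV₁ hbd
    have hIsub : IsSubdesign B (V₁ ∩ d) := by
      intro u hu w hw huw
      obtain ⟨b', hb'B, hub', hwb'⟩ := hexists u w (hIV hu) (hIV hw) huw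
      have h1 : b' ⊆ V₁ := hblk V₁ hV₁ u (hIV₁ hu) w (hIV₁ hw) huw b' hb'B hub' hwb'
      have h2 : b' ⊆ d := hblk d hd u (Finset.mem_inter.mp hu).2 w (Finset.mem_inter.mp hw).2
        huw b' hb'B hub' hwb'
      exact ⟨b', hb'B, hub', hwb', Finset.subset_inter h1 h2⟩
    have hkI : k ≤ (V₁ ∩ d).card := by
      rw [← (hB b hbB).2]; exact Finset.card_le_card hbI
    rcases eq_or_lt_of_le hkI with heq | hlt
    · have hIb : V₁ ∩ d = b :=
        (Finset.eq_of_subset_of_card_le hbI (by rw [(hB b hbB).2]; exact heq.ge)).symm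
      rw [hIb, hBxdef, Finset.mem_filter]
      exact ⟨hbB, hxb, hbV₁⟩
    · exfalso
      have hv'le : v' ≤ (V₁ ∩ d).card := hmin (V₁ ∩ d) hIV hIsub hlt
      have hIeq : V₁ ∩ d = V₁ :=
        Finset.eq_of_subset_of_card_le hIV₁ (by rw [hV₁card]; exact hv'le)
      have hV₁d : V₁ ⊆ d := by rw [← hIeq]; exact Finset.inter_subset_right
      exact hne (Finset.eq_of_subset_of_card_le hV₁d
        (le_of_eq (by rw [hdcard, hV₁card]))).symm
  -- converse: any d ⊇ b (b ∈ Bx), d ≠ V₁, has V₁ ∩ d = b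
  have hconv : ∀ b ∈ Bx, ∀ d ∈ D, d ≠ V₁ → b ⊆ d → V₁ ∩ d = b := by
    intro b hb d hd hne hbd
    rw [hBxdef, Finset.mem_filter] at hb
    obtain ⟨hbB, hxb, hbV₁⟩ := hb
    have hxd : x ∈ d := hbd hxb
    have hnsing : V₁ ∩ d ≠ {x} := by
      obtain ⟨y, hy⟩ : (b.erase x).Nonempty := by
        rw [← Finset.card_pos, Finset.card_erase_of_mem hxb, (hB b hbB).2]
        omega
      obtain ⟨hyx, hyb⟩ := Finset.mem_erase.mp hy
      intro hcon
      have : y ∈ V₁ ∩ d := Finset.mem_inter.mpr ⟨hbV₁ hyb, hbd hyb⟩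
      rw [hcon, Finset.mem_singleton] at this
      exact hyx this
    have hI := hstruct d hd hne hxd hnsing
    rw [hBxdef, Finset.mem_filter] at hI
    exact (Finset.eq_of_subset_of_card_le (Finset.subset_inter hbV₁ hbd)
      (le_of_eq (by rw [(hB b hbB).2, (hB _ hI.1).2]))).symm
  set Dx := D.filter (fun d => V₁ ∩ d = {x}) with hDxdef
  set T := S.filter (fun d => d ≠ V₁ ∧ V₁ ∩ d ≠ {x}) with hTdef
  have hTcard : T.card = r * (m - 1) := by
    have hTU : T = Bx.biUnion (fun b => D.filter (fun d => d ≠ V₁ ∧ V₁ ∩ d = b)) := by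
      ext d
      simp only [hTdef, hSdef, Finset.mem_filter, Finset.mem_biUnion]
      constructor
      · rintro ⟨⟨hdD, hxd⟩, hne, hnsing⟩
        exact ⟨V₁ ∩ d, hstruct d hdD hne hxd hnsing, hdD, hne, rfl⟩
      · rintro ⟨b, hbBx, hdD, hne, hIb⟩
        have hbm := hbBx
        rw [hBxdef, Finset.mem_filter] at hbm
        have hbd : b ⊆ d := hIb ▸ Finset.inter_subset_right
        refine ⟨⟨hdD, hbd hbm.2.1⟩, hne, ?_⟩
        rw [hIb]
        intro hcon
        have := (hB b hbm.1).2
        rw [hcon, Finset.card_singleton] at this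
        omega
    have hdisj : ∀ b₁ ∈ Bx, ∀ b₂ ∈ Bx, b₁ ≠ b₂ →
        Disjoint (D.filter (fun d => d ≠ V₁ ∧ V₁ ∩ d = b₁))
          (D.filter (fun d => d ≠ V₁ ∧ V₁ ∩ d = b₂)) := by
      intro b₁ _ b₂ _ hne
      rw [Finset.disjoint_left]
      intro d hd1 hd2
      rw [Finset.mem_filter] at hd1 hd2
      exact hne (hd1.2.2 ▸ hd2.2.2)
    have hcardb : ∀ b ∈ Bx, (D.filter (fun d => d ≠ V₁ ∧ V₁ ∩ d = b)).card = m - 1 := by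
      intro b hb
      have hbm := hb
      rw [hBxdef, Finset.mem_filter] at hbm
      have hfe : D.filter (fun d => d ≠ V₁ ∧ V₁ ∩ d = b)
          = (D.filter (fun d => b ⊆ d)).erase V₁ := by
        ext d
        simp only [Finset.mem_filter, Finset.mem_erase]
        constructor
        · rintro ⟨hdD, hne, hIb⟩
          exact ⟨hne, hdD, hIb ▸ Finset.inter_subset_right⟩
        · rintro ⟨hne, hdD, hbd⟩
          exact ⟨hdD, hne, hconv b hb d hdD hne hbd⟩
      rw [hfe, Finset.card_erase_of_mem (Finset.mem_filter.mpr ⟨hV₁, hbm.2.2⟩), hm b hbm.1]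
    rw [hTU, Finset.card_biUnion hdisj, Finset.sum_congr rfl hcardb,
      Finset.sum_const, smul_eq_mul]
  -- m ≥ 1
  have hm1 : 1 ≤ m := by
    obtain ⟨y, hy⟩ : (V₁.erase x).Nonempty := by
      rw [← Finset.card_pos, Finset.card_erase_of_mem hx, hV₁card]; omega
    obtain ⟨hyx, hyV₁⟩ := Finset.mem_erase.mp hy
    obtain ⟨b, hbB, hxb, hyb⟩ := hexists x y hxV (hV₁V hyV₁) (Ne.symm hyx)
    have hbV₁ : b ⊆ V₁ := hblk V₁ hV₁ x hx y hyV₁ (Ne.symm hyx) b hbB hxb hyb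
    have hmem : V₁ ∈ D.filter (fun d => b ⊆ d) := Finset.mem_filter.mpr ⟨hV₁, hbV₁⟩
    have hpos := Finset.card_pos.mpr ⟨V₁, hmem⟩
    rw [hm b hbB] at hpos
    omega
  -- partition of S
  have hpart : S = insert V₁ (Dx ∪ T) := by
    ext d
    simp only [hSdef, hDxdef, hTdef, Finset.mem_insert, Finset.mem_union, Finset.mem_filter]
    constructor
    · rintro ⟨hdD, hxd⟩
      by_cases h1 : d = V₁
      · exact Or.inl h1
      by_cases h2 : V₁ ∩ d = {x}
      · exact Or.inr (Or.inl ⟨hdD, h2⟩)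
      · exact Or.inr (Or.inr ⟨⟨hdD, hxd⟩, h1, h2⟩)
    · rintro (h | ⟨hdD, hI⟩ | ⟨hdS, _⟩)
      · exact ⟨h ▸ hV₁, h ▸ hx⟩
      · refine ⟨hdD, ?_⟩
        have : x ∈ V₁ ∩ d := hI ▸ Finset.mem_singleton_self x
        exact (Finset.mem_inter.mp this).2
      · exact hdS
  have hV₁notin : V₁ ∉ Dx ∪ T := by
    simp only [hDxdef, hTdef, Finset.mem_union, Finset.mem_filter]
    rintro (⟨_, hI⟩ | ⟨_, hne, _⟩)
    · rw [Finset.inter_self] at hI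
      have := hV₁card
      rw [hI, Finset.card_singleton] at this
      omega
    · exact hne rfl
  have hdisjDT : Disjoint Dx T := by
    rw [Finset.disjoint_left]
    intro d hd1 hd2
    rw [hDxdef, Finset.mem_filter] at hd1
    rw [hTdef, Finset.mem_filter] at hd2
    exact hd2.2.2 hd1.2
  have he1 : l = 1 + Dx.card + r * (m - 1) := by
    rw [← hScard, hpart, Finset.card_insert_of_notMem hV₁notin,
      Finset.card_union_of_disjoint hdisjDT, hTcard]
    omega
  -- final arithmetic over ℚ
  have hv'v : v' ≤ v := by rw [← hV, ← hV₁card]; exact Finset.card_le_card hV₁V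
  have hk0 : ((k : ℚ) - 1) ≠ 0 := by
    have : (3 : ℚ) ≤ (k : ℚ) := by exact_mod_cast hk
    linarith
  have hv'0 : ((v' : ℚ) - 1) ≠ 0 := by
    have : (4 : ℚ) ≤ (v' : ℚ) := by exact_mod_cast (by omega : 4 ≤ v')
    linarith
  have q2 : ((v' : ℚ) - 1) = (r : ℚ) * ((k : ℚ) - 1) := by
    have h : ((v' - 1 : ℕ) : ℚ) = ((r * (k - 1) : ℕ) : ℚ) := by exact_mod_cast hre
    rw [Nat.cast_mul, Nat.cast_sub (by omega : 1 ≤ v'), Nat.cast_sub (by omega : 1 ≤ k)] at h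
    simpa using h
  have q3 : (l : ℚ) * ((v' : ℚ) - 1) = ((v : ℚ) - 1) * (m : ℚ) := by
    have h : ((l * (v' - 1) : ℕ) : ℚ) = (((v - 1) * m : ℕ) : ℚ) := by exact_mod_cast he3
    rw [Nat.cast_mul, Nat.cast_mul, Nat.cast_sub (by omega : 1 ≤ v'),
      Nat.cast_sub (by omega : 1 ≤ v)] at h
    simpa using h
  have q1 : (l : ℚ) = 1 + (Dx.card : ℚ) + (r : ℚ) * ((m : ℚ) - 1) := by
    have h : ((l : ℕ) : ℚ) = ((1 + Dx.card + r * (m - 1) : ℕ) : ℚ) := by exact_mod_cast he1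
    rw [Nat.cast_add, Nat.cast_add, Nat.cast_mul, Nat.cast_sub hm1] at h
    simpa using h
  have hrq : (r : ℚ) = ((v' : ℚ) - 1) / ((k : ℚ) - 1) := by
    rw [eq_div_iff hk0]; linarith
  have hlq : (l : ℚ) = (m : ℚ) * ((v : ℚ) - 1) / ((v' : ℚ) - 1) := by
    rw [eq_div_iff hv'0]; linarith
  have hA : ((Dx.card : ℕ) : ℚ) = (l : ℚ) - 1 - (r : ℚ) * ((m : ℚ) - 1) := by linarith
  show ((Dx.card : ℕ) : ℚ) = _
  rw [hA, hlq, hrq]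
  field_simp
  ring
end

section
/- Let (V,𝓑) be a (v,k,1)-BIBD with well-distributed minimal (v',k,1)-sub-BIBDs. Fix a minimal subdesign V₁. Then the number of minimal subdesigns disjoint from V₁ equals m((v−1)(v−v'²)/(v'(v'−1)) + v'(v'−1)/k) − (v'−1)(v'−k)/k. -/
private lemma dcount {α β : Type*} (s : Finset α) (t : Finset β) (r : α → β → Prop)
    [∀ a b, Decidable (r a b)] :
    ∑ a ∈ s, (t.filter fun b => r a b).card = ∑ b ∈ t, (s.filter fun a => r a b).card := by
  simp_rw [Finset.card_filter]
  exact Finset.sum_comm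

theorem stmt11
    {alpha : Type*} [DecidableEq alpha] (V : Finset alpha) (B : Finset (Finset alpha))
    (D : Finset (Finset alpha)) (v k v' l m : ℕ)
    (hk : 2 < k) (hk' : k < v') (hV : V.card = v)
    (hB : ∀ b ∈ B, b ⊆ V ∧ b.card = k)
    (hpair : ∀ x ∈ V, ∀ y ∈ V, x ≠ y → (B.filter fun b => x ∈ b ∧ y ∈ b).card = 1)
    (hDne : D.Nonempty)
    (hD : ∀ d ∈ D, d ⊆ V ∧ d.card = v' ∧ IsSubdesign B d)
    (hmin : ∀ W ⊆ V, IsSubdesign B W → k < W.card → v' ≤ W.card)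
    (hall : ∀ W ⊆ V, IsSubdesign B W → W.card = v' → W ∈ D)
    (hl : ∀ x ∈ V, (D.filter fun d => x ∈ d).card = l)
    (hm : ∀ b ∈ B, (D.filter fun d => b ⊆ d).card = m)
    (V₁ : Finset alpha) (hV₁ : V₁ ∈ D) :
    ((D.filter fun d => V₁ ∩ d = ∅).card : ℚ)
      = m * (((v : ℚ) - 1) * ((v : ℚ) - (v' : ℚ) ^ 2) / (v' * ((v' : ℚ) - 1))
          + v' * ((v' : ℚ) - 1) / k)
        - ((v' : ℚ) - 1) * ((v' : ℚ) - k) / k := by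
  obtain ⟨hV₁V, hV₁c, hV₁s⟩ := hD V₁ hV₁
  -- uniqueness of blocks through two points
  have huniq : ∀ x ∈ V, ∀ y ∈ V, x ≠ y → ∀ b₁ ∈ B, ∀ b₂ ∈ B,
      x ∈ b₁ → y ∈ b₁ → x ∈ b₂ → y ∈ b₂ → b₁ = b₂ := by
    intro x hx y hy hxy b₁ h1 b₂ h2 hx1 hy1 hx2 hy2
    have h := hpair x hx y hy hxy
    exact Finset.card_le_one.mp h.le b₁ (Finset.mem_filter.mpr ⟨h1, hx1, hy1⟩)
      b₂ (Finset.mem_filter.mpr ⟨h2, hx2, hy2⟩)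
  have hVsub : IsSubdesign B V := by
    intro x hx y hy hxy
    obtain ⟨b, hb⟩ := Finset.card_eq_one.mp (hpair x hx y hy hxy)
    have hbm := Finset.mem_filter.mp (hb ▸ Finset.mem_singleton_self b)
    exact ⟨b, hbm.1, hbm.2.1, hbm.2.2, (hB b hbm.1).1⟩
  -- key1: number of blocks through x inside a subdesign W
  have key1 : ∀ W ⊆ V, IsSubdesign B W → ∀ x ∈ W,
      (B.filter fun b => x ∈ b ∧ b ⊆ W).card * (k - 1) = W.card - 1 := by
    intro W hWV hWs x hx
    have hd := dcount (W.erase x) (B.filter fun b => x ∈ b ∧ b ⊆ W) (fun y b => y ∈ b)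
    have hL : ∀ y ∈ W.erase x,
        ((B.filter fun b => x ∈ b ∧ b ⊆ W).filter fun b => y ∈ b).card = 1 := by
      intro y hy
      obtain ⟨hyx, hyW⟩ := Finset.mem_erase.mp hy
      obtain ⟨b₀, hb₀, hxb, hyb, hbW⟩ := hWs x hx y hyW (Ne.symm hyx)
      rw [Finset.card_eq_one]
      refine ⟨b₀, ?_⟩
      ext b
      simp only [Finset.mem_filter, Finset.mem_singleton]
      constructor
      · rintro ⟨⟨hbB, hxb', hbW'⟩, hyb'⟩
        exact huniq x (hWV hx) y (hWV hyW) (Ne.symm hyx) b hbB b₀ hb₀ hxb' hyb' hxb hyb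
      · rintro rfl; exact ⟨⟨hb₀, hxb, hbW⟩, hyb⟩
    have hR : ∀ b ∈ B.filter fun b => x ∈ b ∧ b ⊆ W,
        ((W.erase x).filter fun y => y ∈ b).card = k - 1 := by
      intro b hb
      obtain ⟨hbB, hxb, hbW⟩ := Finset.mem_filter.mp hb
      have he : (W.erase x).filter (fun y => y ∈ b) = b.erase x := by
        ext y
        simp only [Finset.mem_filter, Finset.mem_erase]
        exact ⟨fun ⟨⟨h1, _⟩, h3⟩ => ⟨h1, h3⟩, fun ⟨h1, h2⟩ => ⟨⟨h1, hbW h2⟩, h2⟩⟩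
      rw [he, Finset.card_erase_of_mem hxb, (hB b hbB).2]
    rw [Finset.sum_congr rfl hL, Finset.sum_congr rfl hR, Finset.sum_const,
      Finset.sum_const, smul_eq_mul, smul_eq_mul, mul_one,
      Finset.card_erase_of_mem hx] at hd
    exact hd.symm
  -- key2: number of blocks inside a subdesign W
  have key2 : ∀ W ⊆ V, IsSubdesign B W →
      (B.filter fun b => b ⊆ W).card * (k * (k - 1)) = W.card * (W.card - 1) := by
    intro W hWV hWs
    have hd := dcount W B (fun x b => x ∈ b ∧ b ⊆ W)
    have hR : ∀ b ∈ B, (W.filter fun x => x ∈ b ∧ b ⊆ W).card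
        = if b ⊆ W then k else 0 := by
      intro b hbB
      by_cases h : b ⊆ W
      · have he : W.filter (fun x => x ∈ b ∧ b ⊆ W) = b := by
          ext x
          simp only [Finset.mem_filter]
          exact ⟨fun hx => hx.2.1, fun hx => ⟨h hx, hx, h⟩⟩
        rw [if_pos h, he, (hB b hbB).2]
      · rw [if_neg h, Finset.card_eq_zero, Finset.filter_eq_empty_iff]
        exact fun x _ hc => h hc.2
    rw [Finset.sum_congr rfl hR, ← Finset.sum_filter, Finset.sum_const, smul_eq_mul] at hd
    rw [← mul_assoc, ← hd, Finset.sum_mul,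
      Finset.sum_congr rfl (fun a ha => key1 W hWV hWs a ha),
      Finset.sum_const, smul_eq_mul]
  -- intersections are subdesigns
  have hIsub : ∀ d ∈ D, IsSubdesign B (V₁ ∩ d) := by
    intro d hd x hx y hy hxy
    obtain ⟨hxV₁, hxd⟩ := Finset.mem_inter.mp hx
    obtain ⟨hyV₁, hyd⟩ := Finset.mem_inter.mp hy
    obtain ⟨b₁, hb₁, hxb₁, hyb₁, hb₁V₁⟩ := hV₁s x hxV₁ y hyV₁ hxy
    obtain ⟨b₂, hb₂, hxb₂, hyb₂, hb₂d⟩ := (hD d hd).2.2 x hxd y hyd hxy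
    have hbeq : b₁ = b₂ :=
      huniq x (hV₁V hxV₁) y (hV₁V hyV₁) hxy b₁ hb₁ b₂ hb₂ hxb₁ hyb₁ hxb₂ hyb₂
    exact ⟨b₁, hb₁, hxb₁, hyb₁, Finset.subset_inter hb₁V₁ (hbeq ▸ hb₂d)⟩
  -- trichotomy: a nontrivial intersection with another subdesign is a block
  have htri : ∀ d ∈ D, d ≠ V₁ → 2 ≤ (V₁ ∩ d).card → V₁ ∩ d ∈ B := by
    intro d hd hne h2
    obtain ⟨x, hx, y, hy, hxy⟩ := Finset.one_lt_card.mp h2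
    obtain ⟨b, hbB, hxb, hyb, hbI⟩ := hIsub d hd x hx y hy hxy
    have hkI : k ≤ (V₁ ∩ d).card := (hB b hbB).2 ▸ Finset.card_le_card hbI
    have hIV : V₁ ∩ d ⊆ V := fun z hz => hV₁V (Finset.mem_inter.mp hz).1
    rcases eq_or_lt_of_le hkI with heq | hlt
    · have : V₁ ∩ d = b :=
        (Finset.eq_of_subset_of_card_le hbI (by rw [(hB b hbB).2, ← heq])).symm
      exact this ▸ hbB
    · exfalso
      have hge := hmin (V₁ ∩ d) hIV (hIsub d hd) hlt
      have hIV₁ : V₁ ∩ d = V₁ :=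
        Finset.eq_of_subset_of_card_le Finset.inter_subset_left (by rw [hV₁c]; exact hge)
      have : V₁ ⊆ d := hIV₁ ▸ Finset.inter_subset_right
      exact hne (Finset.eq_of_subset_of_card_le this
        (by rw [hV₁c, (hD d hd).2.1])).symm
  -- fiber count: subdesigns meeting V₁ exactly in a given block b ⊆ V₁
  have hfiber : ∀ b ∈ B, b ⊆ V₁ → (D.filter fun d => V₁ ∩ d = b).card = m - 1 := by
    intro b hbB hbV₁
    have hbk : b.card = k := (hB b hbB).2
    have hne' : V₁ ≠ b := by
      intro h
      rw [← h] at hbk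
      rw [hV₁c] at hbk
      omega
    have he : D.filter (fun d => V₁ ∩ d = b) = (D.filter fun d => b ⊆ d).erase V₁ := by
      ext d
      simp only [Finset.mem_filter, Finset.mem_erase]
      constructor
      · rintro ⟨hd, hI⟩
        refine ⟨fun h => ?_, hd, hI ▸ Finset.inter_subset_right⟩
        subst h
        rw [Finset.inter_self] at hI
        exact hne' hI
      · rintro ⟨hne, hd, hsub⟩
        have hbI : b ⊆ V₁ ∩ d := Finset.subset_inter hbV₁ hsub
        have h2 : 2 ≤ (V₁ ∩ d).card :=
          le_trans (by omega) (hbk ▸ Finset.card_le_card hbI)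
        have hIB := htri d hd (fun h => hne h) h2
        exact ⟨hd, (Finset.eq_of_subset_of_card_le hbI
          (by rw [hbk]; exact ((hB _ hIB).2).le)).symm⟩
    rw [he, Finset.card_erase_of_mem (Finset.mem_filter.mpr ⟨hV₁, hbV₁⟩), hm b hbB]
  have hvk : v' ≠ k := Nat.ne_of_gt hk'
  -- count of subdesigns meeting V₁ in a block
  have hA1 : (D.filter fun d => (V₁ ∩ d).card = k).card
      = (B.filter fun b => b ⊆ V₁).card * (m - 1) := by
    have hmem : ∀ d ∈ D.filter fun d => (V₁ ∩ d).card = k,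
        V₁ ∩ d ∈ B.filter fun b => b ⊆ V₁ := by
      intro d hd
      obtain ⟨hdD, hdk⟩ := Finset.mem_filter.mp hd
      have hne : d ≠ V₁ := by
        intro h; subst h; rw [Finset.inter_self, hV₁c] at hdk; exact hvk hdk
      exact Finset.mem_filter.mpr ⟨htri d hdD hne (by omega), Finset.inter_subset_left⟩
    rw [Finset.card_eq_sum_card_fiberwise hmem]
    rw [Finset.sum_congr rfl (fun b hb => ?_), Finset.sum_const, smul_eq_mul]
    obtain ⟨hbB, hbV₁⟩ := Finset.mem_filter.mp hb
    rw [Finset.filter_filter,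
      Finset.filter_congr (fun d _ => ?_ : ∀ d ∈ D, ((V₁ ∩ d).card = k ∧ V₁ ∩ d = b) ↔ V₁ ∩ d = b),
      hfiber b hbB hbV₁]
    exact ⟨fun h => h.2, fun h => ⟨h ▸ (hB b hbB).2, h⟩⟩
  -- |D| * v' = v * l
  have hDn : D.card * v' = v * l := by
    have hd := dcount V D (fun x d => x ∈ d)
    rw [Finset.sum_congr rfl (fun x hx => hl x hx), Finset.sum_const, smul_eq_mul, hV,
      Finset.sum_congr rfl (fun d hd' => ?_), Finset.sum_const, smul_eq_mul] at hd
    · exact hd.symm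
    · have : V.filter (fun x => x ∈ d) = d := by
        ext x
        simp only [Finset.mem_filter]
        exact ⟨fun h => h.2, fun h => ⟨(hD d hd').1 h, h⟩⟩
      rw [this, (hD d hd').2.1]
  -- pick a point
  have hV₁ne : V₁.Nonempty := Finset.card_pos.mp (by omega)
  obtain ⟨x₀, hx₀⟩ := hV₁ne
  -- l * (v' - 1) = m * (v - 1)
  have hE : l * (v' - 1) = m * (v - 1) := by
    have hd := dcount D B (fun d b => x₀ ∈ d ∧ x₀ ∈ b ∧ b ⊆ d)
    have hd2 := congrArg (· * (k - 1)) hd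
    simp only [Finset.sum_mul] at hd2
    have hL : ∀ d ∈ D,
        (B.filter fun b => x₀ ∈ d ∧ x₀ ∈ b ∧ b ⊆ d).card * (k - 1)
          = if x₀ ∈ d then v' - 1 else 0 := by
      intro d hd'
      by_cases h : x₀ ∈ d
      · rw [if_pos h, Finset.filter_congr
          (fun b _ => (⟨fun hc => hc.2, fun hc => ⟨h, hc⟩⟩ :
            x₀ ∈ d ∧ x₀ ∈ b ∧ b ⊆ d ↔ x₀ ∈ b ∧ b ⊆ d))]
        rw [key1 d (hD d hd').1 (hD d hd').2.2 x₀ h, (hD d hd').2.1]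
      · rw [if_neg h, Finset.filter_false_of_mem (fun b _ hc => h hc.1),
          Finset.card_empty, Nat.zero_mul]
    have hR : ∀ b ∈ B,
        (D.filter fun d => x₀ ∈ d ∧ x₀ ∈ b ∧ b ⊆ d).card * (k - 1)
          = if x₀ ∈ b then m * (k - 1) else 0 := by
      intro b hb'
      by_cases h : x₀ ∈ b
      · rw [if_pos h, Finset.filter_congr
          (fun d _ => (⟨fun hc => hc.2.2, fun hc => ⟨hc h, h, hc⟩⟩ :
            x₀ ∈ d ∧ x₀ ∈ b ∧ b ⊆ d ↔ b ⊆ d)), hm b hb']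
      · rw [if_neg h, Finset.filter_false_of_mem (fun d _ hc => h hc.2.1),
          Finset.card_empty, Nat.zero_mul]
    rw [Finset.sum_congr rfl hL, Finset.sum_congr rfl hR, ← Finset.sum_filter,
      ← Finset.sum_filter, Finset.sum_const, Finset.sum_const, smul_eq_mul,
      smul_eq_mul, hl x₀ (hV₁V hx₀)] at hd2
    have hr : (B.filter fun b => x₀ ∈ b).card * (k - 1) = v - 1 := by
      have := key1 V Finset.Subset.rfl hVsub x₀ (hV₁V hx₀)
      rw [Finset.filter_congr (fun b hb => (⟨fun hc => hc.1, fun hc => ⟨hc, (hB b hb).1⟩⟩ :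
        x₀ ∈ b ∧ b ⊆ V ↔ x₀ ∈ b)), hV] at this
      exact this
    calc l * (v' - 1) = (B.filter fun b => x₀ ∈ b).card * (m * (k - 1)) := hd2
      _ = (B.filter fun b => x₀ ∈ b).card * (k - 1) * m := by ring
      _ = m * (v - 1) := by rw [hr]; ring
  -- classification of a subdesign containing x, other than V₁
  have hclass : ∀ x ∈ V₁, ∀ d ∈ D, x ∈ d → d ≠ V₁ →
      V₁ ∩ d = {x} ∨ (V₁ ∩ d).card = k := by
    intro x hx d hd hxd hne
    have hxI : x ∈ V₁ ∩ d := Finset.mem_inter.mpr ⟨hx, hxd⟩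
    rcases Nat.lt_or_ge (V₁ ∩ d).card 2 with h2 | h2
    · left
      have h1 : (V₁ ∩ d).card = 1 := by
        have := Finset.card_pos.mpr ⟨x, hxI⟩
        omega
      obtain ⟨a, ha⟩ := Finset.card_eq_one.mp h1
      rw [ha] at hxI ⊢
      rw [Finset.mem_singleton.mp hxI]
    · right
      exact (hB _ (htri d hd hne h2)).2
  -- per-point decomposition
  have hbx : ∀ x ∈ V₁, l = 1 + (D.filter fun d => V₁ ∩ d = {x}).card
      + (B.filter fun b => x ∈ b ∧ b ⊆ V₁).card * (m - 1) := by
    intro x hx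
    have hT : (D.filter fun d => x ∈ d ∧ (V₁ ∩ d).card = k).card
        = (B.filter fun b => x ∈ b ∧ b ⊆ V₁).card * (m - 1) := by
      have hmem : ∀ d ∈ D.filter fun d => x ∈ d ∧ (V₁ ∩ d).card = k,
          V₁ ∩ d ∈ B.filter fun b => x ∈ b ∧ b ⊆ V₁ := by
        intro d hd
        obtain ⟨hdD, hxd, hdk⟩ := Finset.mem_filter.mp hd
        have hne : d ≠ V₁ := by
          intro h; subst h; rw [Finset.inter_self, hV₁c] at hdk; exact hvk hdk
        exact Finset.mem_filter.mpr ⟨htri d hdD hne (by omega),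
          Finset.mem_inter.mpr ⟨hx, hxd⟩, Finset.inter_subset_left⟩
      rw [Finset.card_eq_sum_card_fiberwise hmem]
      rw [Finset.sum_congr rfl (fun b hb => ?_), Finset.sum_const, smul_eq_mul]
      obtain ⟨hbB, hxb, hbV₁⟩ := Finset.mem_filter.mp hb
      rw [Finset.filter_filter,
        Finset.filter_congr (fun d _ => ?_ :
          ∀ d ∈ D, ((x ∈ d ∧ (V₁ ∩ d).card = k) ∧ V₁ ∩ d = b) ↔ V₁ ∩ d = b),
        hfiber b hbB hbV₁]
      constructor
      · exact fun h => h.2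
      · intro h
        exact ⟨⟨(h ▸ Finset.inter_subset_right) hxb, h ▸ (hB b hbB).2⟩, h⟩
    have hU : D.filter (fun d => x ∈ d)
        = ({V₁} ∪ D.filter fun d => V₁ ∩ d = {x})
          ∪ D.filter fun d => x ∈ d ∧ (V₁ ∩ d).card = k := by
      ext d
      simp only [Finset.mem_filter, Finset.mem_union, Finset.mem_singleton]
      constructor
      · rintro ⟨hd, hxd⟩
        by_cases hne : d = V₁
        · exact Or.inl (Or.inl hne)
        · rcases hclass x hx d hd hxd hne with h | h
          · exact Or.inl (Or.inr ⟨hd, h⟩)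
          · exact Or.inr ⟨hd, hxd, h⟩
      · rintro ((rfl | ⟨hd, hs⟩) | ⟨hd, hxd, _⟩)
        · exact ⟨hV₁, hx⟩
        · exact ⟨hd, (hs ▸ Finset.inter_subset_right) (Finset.mem_singleton_self x)⟩
        · exact ⟨hd, hxd⟩
    have hd1 : Disjoint ({V₁} : Finset (Finset alpha))
        (D.filter fun d => V₁ ∩ d = {x}) := by
      rw [Finset.disjoint_singleton_left]
      intro h
      have := (Finset.mem_filter.mp h).2
      rw [Finset.inter_self] at this
      have := congrArg Finset.card this
      rw [hV₁c, Finset.card_singleton] at this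
      omega
    have hd2 : Disjoint (({V₁} : Finset (Finset alpha))
        ∪ D.filter fun d => V₁ ∩ d = {x})
        (D.filter fun d => x ∈ d ∧ (V₁ ∩ d).card = k) := by
      rw [Finset.disjoint_left]
      intro d hd hdT
      have hdk := (Finset.mem_filter.mp hdT).2.2
      rcases Finset.mem_union.mp hd with h | h
      · rw [Finset.mem_singleton.mp h, Finset.inter_self, hV₁c] at hdk
        exact hvk hdk
      · rw [(Finset.mem_filter.mp h).2, Finset.card_singleton] at hdk
        omega
    have := hl x (hV₁V hx)
    rw [hU, Finset.card_union_of_disjoint hd2, Finset.card_union_of_disjoint hd1,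
      Finset.card_singleton, hT] at this
    omega
  -- summing the singleton-intersection counts
  have hsum : ∑ x ∈ V₁, (D.filter fun d => V₁ ∩ d = {x}).card
      = (D.filter fun d => (V₁ ∩ d).card = 1).card := by
    have hd := dcount V₁ D (fun x d => V₁ ∩ d = {x})
    have hper : ∀ d ∈ D, (V₁.filter fun x => V₁ ∩ d = {x}).card
        = if (V₁ ∩ d).card = 1 then 1 else 0 := by
      intro d _
      by_cases h : (V₁ ∩ d).card = 1
      · rw [if_pos h]
        obtain ⟨a, ha⟩ := Finset.card_eq_one.mp h
        have haV₁ : a ∈ V₁ :=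
          Finset.inter_subset_left (ha ▸ Finset.mem_singleton_self a)
        have he : V₁.filter (fun x => V₁ ∩ d = {x}) = {a} := by
          ext x
          simp only [Finset.mem_filter, Finset.mem_singleton]
          constructor
          · rintro ⟨-, hxx⟩
            rw [ha] at hxx
            exact (Finset.singleton_injective hxx).symm
          · rintro rfl
            exact ⟨haV₁, ha⟩
        rw [he, Finset.card_singleton]
      · rw [if_neg h, Finset.card_eq_zero, Finset.filter_eq_empty_iff]
        intro x _ hc
        exact h (by rw [hc, Finset.card_singleton])
    rw [hd, Finset.sum_congr rfl hper, ← Finset.card_filter]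
  -- summed equation
  have hB2 : v' * (l * (k - 1)) = v' * (k - 1)
      + (D.filter fun d => (V₁ ∩ d).card = 1).card * (k - 1)
      + v' * ((v' - 1) * (m - 1)) := by
    have hper : ∀ x ∈ V₁, l * (k - 1)
        = (k - 1) + (D.filter fun d => V₁ ∩ d = {x}).card * (k - 1)
          + (v' - 1) * (m - 1) := by
      intro x hx
      have h2 : (B.filter fun b => x ∈ b ∧ b ⊆ V₁).card * (k - 1) = v' - 1 := by
        have := key1 V₁ hV₁V hV₁s x hx
        rw [hV₁c] at this
        exact this
      calc l * (k - 1)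
          = (1 + (D.filter fun d => V₁ ∩ d = {x}).card
              + (B.filter fun b => x ∈ b ∧ b ⊆ V₁).card * (m - 1)) * (k - 1) := by
            rw [← hbx x hx]
        _ = (k - 1) + (D.filter fun d => V₁ ∩ d = {x}).card * (k - 1)
              + (B.filter fun b => x ∈ b ∧ b ⊆ V₁).card * (k - 1) * (m - 1) := by
            ring
        _ = (k - 1) + (D.filter fun d => V₁ ∩ d = {x}).card * (k - 1)
              + (v' - 1) * (m - 1) := by rw [h2]
    have hc : ∑ x ∈ V₁, (l * (k - 1)) = v' * (l * (k - 1)) := by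
      rw [Finset.sum_const, smul_eq_mul, hV₁c]
    rw [← hc, Finset.sum_congr rfl hper, Finset.sum_add_distrib,
      Finset.sum_add_distrib, Finset.sum_const, Finset.sum_const, smul_eq_mul,
      smul_eq_mul, hV₁c, ← Finset.sum_mul, hsum]
  -- final partition of D
  have hvk0 : (V₁ ∩ V₁).card = v' := by rw [Finset.inter_self, hV₁c]
  have hpartD : D = (({V₁} ∪ D.filter fun d => V₁ ∩ d = ∅)
      ∪ D.filter fun d => (V₁ ∩ d).card = 1)
      ∪ D.filter fun d => (V₁ ∩ d).card = k := by
    ext d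
    simp only [Finset.mem_union, Finset.mem_filter, Finset.mem_singleton]
    constructor
    · intro hd
      by_cases hne : d = V₁
      · exact Or.inl (Or.inl (Or.inl hne))
      · rcases Nat.lt_or_ge (V₁ ∩ d).card 2 with h2 | h2
        · rcases (by omega : (V₁ ∩ d).card = 0 ∨ (V₁ ∩ d).card = 1) with h | h
          · exact Or.inl (Or.inl (Or.inr ⟨hd, Finset.card_eq_zero.mp h⟩))
          · exact Or.inl (Or.inr ⟨hd, h⟩)
        · exact Or.inr ⟨hd, (hB _ (htri d hd hne h2)).2⟩
    · rintro ((( rfl | ⟨hd, -⟩) | ⟨hd, -⟩) | ⟨hd, -⟩) <;> first | exact hV₁ | exact hd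
  have hdj1 : Disjoint ({V₁} : Finset (Finset alpha))
      (D.filter fun d => V₁ ∩ d = ∅) := by
    rw [Finset.disjoint_singleton_left]
    intro h
    have := (Finset.mem_filter.mp h).2
    rw [this, Finset.card_empty] at hvk0
    omega
  have hdj2 : Disjoint (({V₁} : Finset (Finset alpha))
      ∪ D.filter fun d => V₁ ∩ d = ∅)
      (D.filter fun d => (V₁ ∩ d).card = 1) := by
    rw [Finset.disjoint_left]
    intro d hd hd1
    have h1 := (Finset.mem_filter.mp hd1).2
    rcases Finset.mem_union.mp hd with h | h
    · rw [Finset.mem_singleton.mp h] at h1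
      rw [hvk0] at h1
      omega
    · rw [(Finset.mem_filter.mp h).2, Finset.card_empty] at h1
      omega
  have hdj3 : Disjoint ((({V₁} : Finset (Finset alpha))
      ∪ D.filter fun d => V₁ ∩ d = ∅)
      ∪ D.filter fun d => (V₁ ∩ d).card = 1)
      (D.filter fun d => (V₁ ∩ d).card = k) := by
    rw [Finset.disjoint_left]
    intro d hd hdk
    have h1 := (Finset.mem_filter.mp hdk).2
    rcases Finset.mem_union.mp hd with h | h
    · rcases Finset.mem_union.mp h with h' | h'
      · rw [Finset.mem_singleton.mp h'] at h1
        rw [hvk0] at h1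
        omega
      · rw [(Finset.mem_filter.mp h').2, Finset.card_empty] at h1
        omega
    · rw [(Finset.mem_filter.mp h).2] at h1
      omega
  have hcard : D.card = 1 + (D.filter fun d => V₁ ∩ d = ∅).card
      + (D.filter fun d => (V₁ ∩ d).card = 1).card
      + (D.filter fun d => (V₁ ∩ d).card = k).card := by
    conv_lhs => rw [hpartD]
    rw [Finset.card_union_of_disjoint hdj3, Finset.card_union_of_disjoint hdj2,
      Finset.card_union_of_disjoint hdj1, Finset.card_singleton]
  -- basic inequalities
  have hv'v : v' ≤ v := by
    rw [← hV, ← hV₁c]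
    exact Finset.card_le_card hV₁V
  have hm1 : 1 ≤ m := by
    obtain ⟨x, hx, y, hy, hxy⟩ := Finset.one_lt_card.mp
      (show 1 < V₁.card by omega)
    obtain ⟨b, hbB, -, -, hbV₁⟩ := hV₁s x hx y hy hxy
    rw [← hm b hbB]
    exact Finset.card_pos.mpr ⟨V₁, Finset.mem_filter.mpr ⟨hV₁, hbV₁⟩⟩
  have hkeyV₁ : (B.filter fun b => b ⊆ V₁).card * (k * (k - 1)) = v' * (v' - 1) := by
    have := key2 V₁ hV₁V hV₁s
    rw [hV₁c] at this
    exact this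
  -- cast lemmas
  have cv' : ((v' - 1 : ℕ) : ℚ) = (v' : ℚ) - 1 := by
    rw [Nat.cast_sub (by omega)]; norm_num
  have cv : ((v - 1 : ℕ) : ℚ) = (v : ℚ) - 1 := by
    rw [Nat.cast_sub (by omega)]; norm_num
  have ck : ((k - 1 : ℕ) : ℚ) = (k : ℚ) - 1 := by
    rw [Nat.cast_sub (by omega)]; norm_num
  have cm : ((m - 1 : ℕ) : ℚ) = (m : ℚ) - 1 := by
    rw [Nat.cast_sub (by omega)]; norm_num
  -- rational equations
  have q1 : (D.card : ℚ) * v' = v * l := by exact_mod_cast hDn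
  have q2 : (l : ℚ) * ((v' : ℚ) - 1) = m * ((v : ℚ) - 1) := by
    have := congrArg (Nat.cast : ℕ → ℚ) hE
    push_cast [cv', cv] at this
    exact this
  have q3 : ((D.filter fun d => (V₁ ∩ d).card = k).card : ℚ) * ((k : ℚ) * ((k : ℚ) - 1))
      = ((m : ℚ) - 1) * ((v' : ℚ) * ((v' : ℚ) - 1)) := by
    have hnat : (D.filter fun d => (V₁ ∩ d).card = k).card * (k * (k - 1))
        = (v' * (v' - 1)) * (m - 1) := by
      calc (D.filter fun d => (V₁ ∩ d).card = k).card * (k * (k - 1))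
          = (B.filter fun b => b ⊆ V₁).card * (k * (k - 1)) * (m - 1) := by
            rw [hA1]; ring
        _ = (v' * (v' - 1)) * (m - 1) := by rw [hkeyV₁]
    have := congrArg (Nat.cast : ℕ → ℚ) hnat
    push_cast [cv', ck, cm] at this
    linarith [this]
  have q4 : (v' : ℚ) * ((l : ℚ) * ((k : ℚ) - 1)) = (v' : ℚ) * ((k : ℚ) - 1)
      + ((D.filter fun d => (V₁ ∩ d).card = 1).card : ℚ) * ((k : ℚ) - 1)
      + (v' : ℚ) * (((v' : ℚ) - 1) * ((m : ℚ) - 1)) := by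
    have := congrArg (Nat.cast : ℕ → ℚ) hB2
    push_cast [cv', ck, cm] at this
    exact this
  have q5 : ((D.card : ℚ)) = 1 + ((D.filter fun d => V₁ ∩ d = ∅).card : ℚ)
      + ((D.filter fun d => (V₁ ∩ d).card = 1).card : ℚ)
      + ((D.filter fun d => (V₁ ∩ d).card = k).card : ℚ) := by
    exact_mod_cast hcard
  -- nonvanishing denominators
  have hk3 : (3 : ℚ) ≤ (k : ℚ) := by exact_mod_cast hk
  have hv'4 : (4 : ℚ) ≤ (v' : ℚ) := by exact_mod_cast (by omega : 4 ≤ v')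
  have nz1 : (v' : ℚ) ≠ 0 := by linarith
  have nz2 : (v' : ℚ) - 1 ≠ 0 := by intro h; linarith
  have nz3 : (k : ℚ) ≠ 0 := by linarith
  have nz4 : (k : ℚ) - 1 ≠ 0 := by intro h; linarith
  -- solve
  have el : (l : ℚ) = m * ((v : ℚ) - 1) / ((v' : ℚ) - 1) := by
    field_simp
    linear_combination q2
  have eDn : ((D.card : ℚ)) = v * l / v' := by
    field_simp
    linear_combination q1
  have eA : ((D.filter fun d => (V₁ ∩ d).card = k).card : ℚ)
      = ((m : ℚ) - 1) * ((v' : ℚ) * ((v' : ℚ) - 1)) / ((k : ℚ) * ((k : ℚ) - 1)) := by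
    field_simp
    linear_combination q3
  have eB2 : ((D.filter fun d => (V₁ ∩ d).card = 1).card : ℚ)
      = ((v' : ℚ) * ((l : ℚ) * ((k : ℚ) - 1)) - (v' : ℚ) * ((k : ℚ) - 1)
          - (v' : ℚ) * (((v' : ℚ) - 1) * ((m : ℚ) - 1))) / ((k : ℚ) - 1) := by
    rw [eq_div_iff nz4]
    linear_combination -q4
  have eN : ((D.filter fun d => V₁ ∩ d = ∅).card : ℚ)
      = (D.card : ℚ) - 1 - ((D.filter fun d => (V₁ ∩ d).card = 1).card : ℚ)
        - ((D.filter fun d => (V₁ ∩ d).card = k).card : ℚ) := by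
    linarith [q5]
  rw [eN, eDn, eA, eB2, el]
  field_simp
  ring
end

section
/- Let (V,𝓑) be a (v,k,1)-BIBD with a well-distributed collection 𝓓 of minimal (v',k,1)-sub-BIBDs. Fix D₁,D₂ ∈ 𝓓 with |D₁∩D₂| = i. Then Σ_{D ≠ D₁,D₂} |D ∩ (D₁\D₂)|·|D ∩ (D₂\D₁)| = (v'−i)² m. -/
theorem stmt13
    {alpha : Type*} [DecidableEq alpha] (V : Finset alpha) (B : Finset (Finset alpha))
    (D : Finset (Finset alpha)) (v k v' l m : ℕ)
    (hk : 2 < k) (hk' : k < v') (hV : V.card = v)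
    (hB : ∀ b ∈ B, b ⊆ V ∧ b.card = k)
    (hpair : ∀ x ∈ V, ∀ y ∈ V, x ≠ y → (B.filter fun b => x ∈ b ∧ y ∈ b).card = 1)
    (hDne : D.Nonempty)
    (hD : ∀ d ∈ D, d ⊆ V ∧ d.card = v' ∧ IsSubdesign B d)
    (hmin : ∀ W ⊆ V, IsSubdesign B W → k < W.card → v' ≤ W.card)
    (hall : ∀ W ⊆ V, IsSubdesign B W → W.card = v' → W ∈ D)
    (hl : ∀ x ∈ V, (D.filter fun d => x ∈ d).card = l)
    (hm : ∀ b ∈ B, (D.filter fun d => b ⊆ d).card = m)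
    (D₁ D₂ : Finset alpha) (hD₁ : D₁ ∈ D) (hD₂ : D₂ ∈ D)
    (i : ℕ) (hi : (D₁ ∩ D₂).card = i) (hcase : i = 0 ∨ i = 1 ∨ i = k) :
    ∑ d ∈ D.filter (fun d => d ≠ D₁ ∧ d ≠ D₂),
        ((d ∩ (D₁ \ D₂)).card : ℚ) * ((d ∩ (D₂ \ D₁)).card : ℚ)
      = ((v' : ℚ) - i) ^ 2 * m := by
  classical
  -- every pair of distinct points of V lies in exactly m members of D
  have key : ∀ x ∈ V, ∀ y ∈ V, x ≠ y →
      (D.filter fun d => x ∈ d ∧ y ∈ d).card = m := by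
    intro x hx y hy hxy
    obtain ⟨b, hb⟩ := Finset.card_eq_one.mp (hpair x hx y hy hxy)
    have hbB : b ∈ B ∧ x ∈ b ∧ y ∈ b := by
      have : b ∈ B.filter fun b => x ∈ b ∧ y ∈ b := hb ▸ Finset.mem_singleton_self b
      simpa using this
    have : (D.filter fun d => x ∈ d ∧ y ∈ d) = (D.filter fun d => b ⊆ d) := by
      apply Finset.filter_congr
      intro d hd
      constructor
      · rintro ⟨hxd, hyd⟩
        obtain ⟨b', hb'B, hxb', hyb', hb'd⟩ := (hD d hd).2.2 x hxd y hyd hxy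
        have : b' ∈ B.filter fun b => x ∈ b ∧ y ∈ b := by
          simp [hb'B, hxb', hyb']
        rw [hb] at this
        simpa [Finset.mem_singleton.mp this] using hb'd
      · intro hbd
        exact ⟨hbd hbB.2.1, hbd hbB.2.2⟩
    rw [this]
    exact hm b hbB.1
  set A₁ := D₁ \ D₂ with hA₁
  set A₂ := D₂ \ D₁ with hA₂
  set S := D.filter (fun d => d ≠ D₁ ∧ d ≠ D₂) with hS
  have step1 : ∑ d ∈ S, ((d ∩ A₁).card : ℚ) * ((d ∩ A₂).card : ℚ)
      = ∑ x ∈ A₁, ∑ y ∈ A₂, ((S.filter fun d => x ∈ d ∧ y ∈ d).card : ℚ) := by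
    have expand : ∀ d : Finset alpha,
        ((d ∩ A₁).card : ℚ) * ((d ∩ A₂).card : ℚ)
        = ∑ x ∈ A₁, ∑ y ∈ A₂, (if x ∈ d ∧ y ∈ d then (1 : ℚ) else 0) := by
      intro d
      have h1 : ((d ∩ A₁).card : ℚ) = ∑ x ∈ A₁, (if x ∈ d then (1 : ℚ) else 0) := by
        rw [Finset.inter_comm, ← Finset.filter_mem_eq_inter]
        simp [Finset.card_filter]
      have h2 : ((d ∩ A₂).card : ℚ) = ∑ y ∈ A₂, (if y ∈ d then (1 : ℚ) else 0) := by
        rw [Finset.inter_comm, ← Finset.filter_mem_eq_inter]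
        simp [Finset.card_filter]
      rw [h1, h2, Finset.sum_mul_sum]
      refine Finset.sum_congr rfl fun x _ => Finset.sum_congr rfl fun y _ => ?_
      by_cases hx : x ∈ d <;> by_cases hy : y ∈ d <;> simp [hx, hy]
    calc ∑ d ∈ S, ((d ∩ A₁).card : ℚ) * ((d ∩ A₂).card : ℚ)
        = ∑ d ∈ S, ∑ x ∈ A₁, ∑ y ∈ A₂, (if x ∈ d ∧ y ∈ d then (1 : ℚ) else 0) :=
          Finset.sum_congr rfl fun d _ => expand d
      _ = ∑ x ∈ A₁, ∑ y ∈ A₂, ∑ d ∈ S, (if x ∈ d ∧ y ∈ d then (1 : ℚ) else 0) := by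
          rw [Finset.sum_comm]
          exact Finset.sum_congr rfl fun x _ => Finset.sum_comm
      _ = ∑ x ∈ A₁, ∑ y ∈ A₂, ((S.filter fun d => x ∈ d ∧ y ∈ d).card : ℚ) := by
          refine Finset.sum_congr rfl fun x _ => Finset.sum_congr rfl fun y _ => ?_
          rw [Finset.card_filter, Nat.cast_sum]
          exact Finset.sum_congr rfl fun d _ => by by_cases h : x ∈ d ∧ y ∈ d <;> simp [h]
  have hD₁V := (hD D₁ hD₁).1
  have hD₂V := (hD D₂ hD₂).1
  have step2 : ∀ x ∈ A₁, ∀ y ∈ A₂,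
      (S.filter fun d => x ∈ d ∧ y ∈ d).card = m := by
    intro x hx y hy
    have hxm := Finset.mem_sdiff.mp hx
    have hym := Finset.mem_sdiff.mp hy
    have hxy : x ≠ y := fun h => hxm.2 (h ▸ hym.1)
    have : (S.filter fun d => x ∈ d ∧ y ∈ d) = (D.filter fun d => x ∈ d ∧ y ∈ d) := by
      rw [hS, Finset.filter_filter]
      apply Finset.filter_congr
      intro d hd
      constructor
      · rintro ⟨_, h⟩; exact h
      · rintro ⟨hxd, hyd⟩
        exact ⟨⟨fun h => hym.2 (h ▸ hyd), fun h => hxm.2 (h ▸ hxd)⟩, hxd, hyd⟩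
    rw [this]
    exact key x (hD₁V hxm.1) y (hD₂V hym.1) hxy
  rw [step1]
  have hcard1 : (A₁.card : ℚ) = (v' : ℚ) - i := by
    have h : (D₁ ∩ D₂).card + (D₁ \ D₂).card = D₁.card :=
      Finset.card_inter_add_card_sdiff D₁ D₂
    rw [hi, (hD D₁ hD₁).2.1] at h
    have : (i : ℚ) + A₁.card = v' := by exact_mod_cast h
    linarith
  have hcard2 : (A₂.card : ℚ) = (v' : ℚ) - i := by
    have h : (D₂ ∩ D₁).card + (D₂ \ D₁).card = D₂.card :=
      Finset.card_inter_add_card_sdiff D₂ D₁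
    rw [Finset.inter_comm, hi, (hD D₂ hD₂).2.1] at h
    have : (i : ℚ) + A₂.card = v' := by exact_mod_cast h
    linarith
  calc ∑ x ∈ A₁, ∑ y ∈ A₂, ((S.filter fun d => x ∈ d ∧ y ∈ d).card : ℚ)
      = ∑ x ∈ A₁, ∑ y ∈ A₂, (m : ℚ) := by
        refine Finset.sum_congr rfl fun x hx => Finset.sum_congr rfl fun y hy => ?_
        rw [step2 x hx y hy]
    _ = (A₁.card : ℚ) * (A₂.card : ℚ) * m := by
        simp only [Finset.sum_const, nsmul_eq_mul]
        ring
    _ = ((v' : ℚ) - i) ^ 2 * m := by rw [hcard1, hcard2]; ring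
end

section
/- Let (V,𝓑) be a (v,k,1)-BIBD with a well-distributed collection 𝓓 of minimal (v',k,1)-sub-BIBDs. Fix D₁,D₂ ∈ 𝓓 with |D₁∩D₂| = i. Then Σ_{D ≠ D₁,D₂} |D ∩ (D₁\D₂)|² = (v'−i)(m((v−1)/(v'−1) + v'−i−1) − v'+i). -/
theorem stmt14
    {alpha : Type*} [DecidableEq alpha] (V : Finset alpha) (B : Finset (Finset alpha))
    (D : Finset (Finset alpha)) (v k v' l m : ℕ)
    (hk : 2 < k) (hk' : k < v') (hV : V.card = v)
    (hB : ∀ b ∈ B, b ⊆ V ∧ b.card = k)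
    (hpair : ∀ x ∈ V, ∀ y ∈ V, x ≠ y → (B.filter fun b => x ∈ b ∧ y ∈ b).card = 1)
    (hDne : D.Nonempty)
    (hD : ∀ d ∈ D, d ⊆ V ∧ d.card = v' ∧ IsSubdesign B d)
    (hmin : ∀ W ⊆ V, IsSubdesign B W → k < W.card → v' ≤ W.card)
    (hall : ∀ W ⊆ V, IsSubdesign B W → W.card = v' → W ∈ D)
    (hl : ∀ x ∈ V, (D.filter fun d => x ∈ d).card = l)
    (hm : ∀ b ∈ B, (D.filter fun d => b ⊆ d).card = m)
    (D₁ D₂ : Finset alpha) (hD₁ : D₁ ∈ D) (hD₂ : D₂ ∈ D)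
    (i : ℕ) (hi : (D₁ ∩ D₂).card = i) (hcase : i = 0 ∨ i = 1 ∨ i = k) :
    ∑ d ∈ D.filter (fun d => d ≠ D₁ ∧ d ≠ D₂),
        ((d ∩ (D₁ \ D₂)).card : ℚ) ^ 2
      = ((v' : ℚ) - i) *
          (m * (((v : ℚ) - 1) / ((v' : ℚ) - 1) + (v' : ℚ) - i - 1)
            - (v' : ℚ) + i) := by
  obtain ⟨hD₁V, hD₁card, -⟩ := hD D₁ hD₁
  obtain ⟨hD₂V, hD₂card, -⟩ := hD D₂ hD₂
  have hv'4 : 4 ≤ v' := by omega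
  have hiltv' : i < v' := by rcases hcase with h | h | h <;> omega
  have hne12 : D₁ ≠ D₂ := by
    intro h
    rw [h, Finset.inter_self, hD₂card] at hi
    omega
  set A := D₁ \ D₂ with hAdef
  have hAcard : A.card = v' - i := by
    have h := Finset.card_inter_add_card_sdiff D₁ D₂
    rw [hAdef]
    omega
  have hAV : A ⊆ V := Finset.Subset.trans Finset.sdiff_subset hD₁V
  -- every pair of distinct points of V lies in exactly m subdesigns
  have pairm : ∀ x ∈ V, ∀ y ∈ V, x ≠ y →
      (D.filter fun d => x ∈ d ∧ y ∈ d).card = m := by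
    intro x hx y hy hxy
    obtain ⟨b, hb⟩ := Finset.card_eq_one.mp (hpair x hx y hy hxy)
    have hbB : b ∈ B ∧ x ∈ b ∧ y ∈ b := by
      have : b ∈ B.filter fun b => x ∈ b ∧ y ∈ b := hb ▸ Finset.mem_singleton_self b
      rw [Finset.mem_filter] at this
      exact ⟨this.1, this.2⟩
    have heq : (D.filter fun d => x ∈ d ∧ y ∈ d) = D.filter fun d => b ⊆ d := by
      apply Finset.filter_congr
      intro d hd
      constructor
      · rintro ⟨hxd, hyd⟩
        obtain ⟨b', hb'B, hxb', hyb', hb'd⟩ := (hD d hd).2.2 x hxd y hyd hxy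
        have hb'mem : b' ∈ B.filter fun b => x ∈ b ∧ y ∈ b :=
          Finset.mem_filter.mpr ⟨hb'B, hxb', hyb'⟩
        rw [hb, Finset.mem_singleton] at hb'mem
        exact hb'mem ▸ hb'd
      · intro hbd
        exact ⟨hbd hbB.2.1, hbd hbB.2.2⟩
    rw [heq, hm b hbB.1]
  -- l * (v' - 1) = m * (v - 1)
  obtain ⟨x₀, hx₀⟩ : D₁.Nonempty := Finset.card_pos.mp (by omega)
  have hx₀V : x₀ ∈ V := hD₁V hx₀
  have hvv' : v' ≤ v := by
    have := Finset.card_le_card hD₁V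
    omega
  have hlm : l * (v' - 1) = m * (v - 1) := by
    have h1 : ∑ y ∈ V.erase x₀, (D.filter fun d => x₀ ∈ d ∧ y ∈ d).card = (v - 1) * m := by
      rw [Finset.sum_congr rfl fun y hy =>
        pairm x₀ hx₀V y (Finset.mem_of_mem_erase hy) (Finset.ne_of_mem_erase hy).symm]
      simp [Finset.card_erase_of_mem hx₀V, hV, mul_comm]
    have h2 : ∑ y ∈ V.erase x₀, (D.filter fun d => x₀ ∈ d ∧ y ∈ d).card = l * (v' - 1) := by
      simp_rw [Finset.card_filter]
      rw [Finset.sum_comm]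
      have hinner : ∀ d ∈ D,
          (∑ y ∈ V.erase x₀, if x₀ ∈ d ∧ y ∈ d then 1 else 0) =
          if x₀ ∈ d then v' - 1 else 0 := by
        intro d hd
        by_cases hxd : x₀ ∈ d
        · simp only [hxd, true_and, if_true]
          have hfe : (V.erase x₀).filter (· ∈ d) = d.erase x₀ := by
            ext y
            simp only [Finset.mem_filter, Finset.mem_erase]
            exact ⟨fun ⟨⟨h1, _⟩, h3⟩ => ⟨h1, h3⟩,
              fun ⟨h1, h2⟩ => ⟨⟨h1, (hD d hd).1 h2⟩, h2⟩⟩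
          rw [Finset.sum_boole, hfe, Finset.card_erase_of_mem hxd, (hD d hd).2.1]
          simp
        · simp [hxd]
      rw [Finset.sum_congr rfl hinner, ← Finset.sum_filter, Finset.sum_const,
        hl x₀ hx₀V, smul_eq_mul]
    rw [← h2, h1, mul_comm]
  -- main double count
  have main : ∑ d ∈ D, (d ∩ A).card ^ 2 = A.card * l + A.card * (A.card - 1) * m := by
    have hcard : ∀ d : Finset alpha, (d ∩ A).card = ∑ x ∈ A, if x ∈ d then 1 else 0 := by
      intro d
      rw [Finset.inter_comm, ← Finset.filter_mem_eq_inter, Finset.card_filter]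
    calc ∑ d ∈ D, (d ∩ A).card ^ 2
        = ∑ d ∈ D, ∑ x ∈ A, ∑ y ∈ A, if x ∈ d ∧ y ∈ d then 1 else 0 := by
          apply Finset.sum_congr rfl
          intro d _
          rw [hcard d, sq, Finset.sum_mul_sum]
          apply Finset.sum_congr rfl
          intro x _
          apply Finset.sum_congr rfl
          intro y _
          by_cases h1 : x ∈ d <;> by_cases h2 : y ∈ d <;> simp [h1, h2]
      _ = ∑ x ∈ A, ∑ y ∈ A, ∑ d ∈ D, if x ∈ d ∧ y ∈ d then 1 else 0 := by
          rw [Finset.sum_comm]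
          apply Finset.sum_congr rfl
          intro x _
          rw [Finset.sum_comm]
      _ = ∑ x ∈ A, ∑ y ∈ A, (D.filter fun d => x ∈ d ∧ y ∈ d).card := by
          simp_rw [Finset.card_filter]
      _ = ∑ _x ∈ A, (l + (A.card - 1) * m) := by
          apply Finset.sum_congr rfl
          intro x hx
          rw [← Finset.add_sum_erase _ _ hx]
          congr 1
          · simpa using hl x (hAV hx)
          · rw [Finset.sum_congr rfl fun y hy =>
              pairm x (hAV hx) y (hAV (Finset.mem_of_mem_erase hy))
                (Finset.ne_of_mem_erase hy).symm,
              Finset.sum_const, Finset.card_erase_of_mem hx, smul_eq_mul]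
      _ = A.card * l + A.card * (A.card - 1) * m := by
          rw [Finset.sum_const, smul_eq_mul]
          ring
  -- split off D₁ and D₂
  have hsplit : (∑ d ∈ D.filter (fun d => d ≠ D₁ ∧ d ≠ D₂), (d ∩ A).card ^ 2) + (v' - i) ^ 2
      = A.card * l + A.card * (A.card - 1) * m := by
    rw [← main, ← Finset.sum_filter_add_sum_filter_not D (fun d => d ≠ D₁ ∧ d ≠ D₂)]
    congr 1
    have hset : D.filter (fun d => ¬(d ≠ D₁ ∧ d ≠ D₂)) = {D₁, D₂} := by
      ext d
      simp only [Finset.mem_filter, not_and_or, not_not, Finset.mem_insert,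
        Finset.mem_singleton]
      constructor
      · tauto
      · rintro (rfl | rfl) <;> simp [hD₁, hD₂]
    rw [hset, Finset.sum_pair hne12]
    have e1 : D₁ ∩ A = A := Finset.inter_eq_right.mpr Finset.sdiff_subset
    have e2 : D₂ ∩ A = ∅ := Finset.inter_sdiff_self _ _
    rw [e1, e2, hAcard]
    simp
  -- pass to ℚ
  obtain ⟨j, hj⟩ : ∃ j, v' - i = j + 1 := ⟨v' - i - 1, by omega⟩
  rw [hAcard, hj] at hsplit
  have hv'q : (v' : ℚ) = (i : ℚ) + j + 1 := by
    have : v' = i + j + 1 := by omega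
    rw [this]; push_cast; ring
  have hlmq : (l : ℚ) * ((i : ℚ) + j) = (m : ℚ) * ((v : ℚ) - 1) := by
    have h' : l * (i + j) = m * (v - 1) := by
      have : v' - 1 = i + j := by omega
      rw [← this]; exact hlm
    have hv1 : 1 ≤ v := by omega
    calc (l : ℚ) * ((i : ℚ) + j) = ((l * (i + j) : ℕ) : ℚ) := by push_cast; ring
      _ = ((m * (v - 1) : ℕ) : ℚ) := by rw [h']
      _ = (m : ℚ) * ((v : ℚ) - 1) := by push_cast [Nat.cast_sub hv1]; ring
  have hSq : (∑ d ∈ D.filter (fun d => d ≠ D₁ ∧ d ≠ D₂), ((d ∩ A).card : ℚ) ^ 2)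
      + ((j : ℚ) + 1) ^ 2
      = ((j : ℚ) + 1) * l + ((j : ℚ) + 1) * j * m := by
    have := congrArg (fun n : ℕ => (n : ℚ)) hsplit
    push_cast at this
    convert this using 2 <;> push_cast <;> ring
  have hden : (v' : ℚ) - 1 ≠ 0 := by
    have h4 : (4 : ℚ) ≤ (v' : ℚ) := by exact_mod_cast hv'4
    intro h
    linarith
  have hij : (i : ℚ) + j ≠ 0 := by
    have h3 : 3 ≤ i + j := by omega
    have h3' : (3 : ℚ) ≤ (i : ℚ) + j := by exact_mod_cast h3
    intro h
    linarith
  have hS : (∑ d ∈ D.filter (fun d => d ≠ D₁ ∧ d ≠ D₂), ((d ∩ A).card : ℚ) ^ 2)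
      = ((j : ℚ) + 1) * l + ((j : ℚ) + 1) * j * m - ((j : ℚ) + 1) ^ 2 := by
    linarith [hSq]
  rw [hS, hv'q, show ((i : ℚ) + (j : ℚ) + 1 - 1) = (i : ℚ) + j from by ring]
  field_simp
  linear_combination ((j : ℚ) + 1) * hlmq
end

section
/- Let (V,𝓑) be a (v,k,1)-BIBD with well-distributed minimal (v',k,1)-sub-BIBDs (m per block). Then m ≤ (v−k)/(v'−k). -/
theorem stmt15
    {alpha : Type*} [DecidableEq alpha] (V : Finset alpha) (B : Finset (Finset alpha))
    (D : Finset (Finset alpha)) (v k v' l m : ℕ)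
    (hk : 2 < k) (hk' : k < v') (hV : V.card = v)
    (hB : ∀ b ∈ B, b ⊆ V ∧ b.card = k)
    (hpair : ∀ x ∈ V, ∀ y ∈ V, x ≠ y → (B.filter fun b => x ∈ b ∧ y ∈ b).card = 1)
    (hDne : D.Nonempty)
    (hD : ∀ d ∈ D, d ⊆ V ∧ d.card = v' ∧ IsSubdesign B d)
    (hmin : ∀ W ⊆ V, IsSubdesign B W → k < W.card → v' ≤ W.card)
    (hall : ∀ W ⊆ V, IsSubdesign B W → W.card = v' → W ∈ D)
    (hl : ∀ x ∈ V, (D.filter fun d => x ∈ d).card = l)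
    (hm : ∀ b ∈ B, (D.filter fun d => b ⊆ d).card = m) :
    (m : ℚ) ≤ ((v : ℚ) - k) / ((v' : ℚ) - k) := by
  obtain ⟨d0, hd0⟩ := hDne
  obtain ⟨hd0V, hd0card, hd0sub⟩ := hD d0 hd0
  have h2 : 1 < d0.card := by omega
  obtain ⟨x, hx, y, hy, hxy⟩ := Finset.one_lt_card.mp h2
  obtain ⟨b, hbB, hxb, hyb, hbd0⟩ := hd0sub x hx y hy hxy
  obtain ⟨hbV, hbk⟩ := hB b hbB
  set S := D.filter (fun d => b ⊆ d) with hS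
  have hScard : S.card = m := hm b hbB
  have hkey : ∀ d1 ∈ S, ∀ d2 ∈ S, d1 ≠ d2 → Disjoint (d1 \ b) (d2 \ b) := by
    intro d1 hd1 d2 hd2 hne
    rw [Finset.disjoint_left]
    intro a ha1 ha2
    simp only [Finset.mem_sdiff] at ha1 ha2
    obtain ⟨hd1D, hbd1⟩ := Finset.mem_filter.mp hd1
    obtain ⟨hd2D, hbd2⟩ := Finset.mem_filter.mp hd2
    obtain ⟨hd1V, hd1card, hd1sub⟩ := hD d1 hd1D
    obtain ⟨hd2V, hd2card, hd2sub⟩ := hD d2 hd2D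
    set W := d1 ∩ d2 with hW
    have hWsub : IsSubdesign B W := by
      intro u hu vv hv huv
      have hu1 : u ∈ d1 := (Finset.mem_inter.mp hu).1
      have hu2 : u ∈ d2 := (Finset.mem_inter.mp hu).2
      have hv1 : vv ∈ d1 := (Finset.mem_inter.mp hv).1
      have hv2 : vv ∈ d2 := (Finset.mem_inter.mp hv).2
      obtain ⟨b1, hb1B, hub1, hvb1, hb1d1⟩ := hd1sub u hu1 vv hv1 huv
      obtain ⟨b2, hb2B, hub2, hvb2, hb2d2⟩ := hd2sub u hu2 vv hv2 huv
      have hcard1 := hpair u (hd1V hu1) vv (hd1V hv1) huv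
      obtain ⟨c, hc⟩ := Finset.card_eq_one.mp hcard1
      have e1 : b1 = c := by
        have : b1 ∈ B.filter (fun bb => u ∈ bb ∧ vv ∈ bb) :=
          Finset.mem_filter.mpr ⟨hb1B, hub1, hvb1⟩
        rw [hc] at this; exact Finset.mem_singleton.mp this
      have e2 : b2 = c := by
        have : b2 ∈ B.filter (fun bb => u ∈ bb ∧ vv ∈ bb) :=
          Finset.mem_filter.mpr ⟨hb2B, hub2, hvb2⟩
        rw [hc] at this; exact Finset.mem_singleton.mp this
      exact ⟨b1, hb1B, hub1, hvb1, fun z hz => Finset.mem_inter.mpr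
        ⟨hb1d1 hz, by rw [e1, ← e2] at hz; exact hb2d2 hz⟩⟩
    have hbW : b ⊆ W := Finset.subset_inter hbd1 hbd2
    have haW : a ∈ W := Finset.mem_inter.mpr ⟨ha1.1, ha2.1⟩
    have hWV : W ⊆ V := fun z hz => hd1V (Finset.mem_inter.mp hz).1
    have hcard : k < W.card := by
      have hsub : insert a b ⊆ W := Finset.insert_subset haW hbW
      have h1 := Finset.card_le_card hsub
      rw [Finset.card_insert_of_notMem ha1.2, hbk] at h1
      omega
    have hv' := hmin W hWV hWsub hcard
    have e1 : W = d1 := Finset.eq_of_subset_of_card_le Finset.inter_subset_left (by omega)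
    have e2 : W = d2 := Finset.eq_of_subset_of_card_le Finset.inter_subset_right (by omega)
    exact hne (e1 ▸ e2)
  have hcount : m * (v' - k) ≤ v - k := by
    have hbU : S.biUnion (fun d => d \ b) ⊆ V \ b := by
      intro z hz
      obtain ⟨d, hd, hzd⟩ := Finset.mem_biUnion.mp hz
      obtain ⟨hdD, _⟩ := Finset.mem_filter.mp hd
      obtain ⟨hdV, _, _⟩ := hD d hdD
      exact Finset.mem_sdiff.mpr ⟨hdV (Finset.mem_sdiff.mp hzd).1, (Finset.mem_sdiff.mp hzd).2⟩
    have hUcard := Finset.card_le_card hbU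
    rw [Finset.card_biUnion hkey] at hUcard
    have hsum : ∀ d ∈ S, (d \ b).card = v' - k := by
      intro d hd
      obtain ⟨hdD, hbd⟩ := Finset.mem_filter.mp hd
      obtain ⟨_, hdc, _⟩ := hD d hdD
      rw [Finset.card_sdiff_of_subset hbd, hdc, hbk]
    rw [Finset.sum_congr rfl hsum, Finset.sum_const, smul_eq_mul, hScard,
      Finset.card_sdiff_of_subset hbV, hV, hbk] at hUcard
    exact hUcard
  have hkv : k ≤ v := by rw [← hV, ← hbk]; exact Finset.card_le_card hbV
  have hpos : (0:ℚ) < (v':ℚ) - k := by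
    have : (k:ℚ) < v' := by exact_mod_cast hk'
    linarith
  rw [le_div_iff₀ hpos]
  have e3 : (m:ℚ) * ((v':ℚ) - k) = ((m * (v' - k) : ℕ) : ℚ) := by
    push_cast [Nat.cast_sub (le_of_lt hk')]; ring
  have e4 : ((v:ℚ) - k) = ((v - k : ℕ) : ℚ) := by
    push_cast [Nat.cast_sub hkv]; ring
  rw [e3, e4]
  exact_mod_cast hcount
end

section
/- Let (V,𝓑) be a (v,k,1)-BIBD with well-distributed minimal (v',k,1)-sub-BIBDs and suppose v < (v'−1)²/(k−1) + 1. Then m ≤ ((v'−k)/(k−1)) / ((v'−1)/(k−1) − (v−1)/(v'−1)). -/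
lemma repl_lemma {alpha : Type*} [DecidableEq alpha] (B : Finset (Finset alpha))
    (V W : Finset alpha) (k : ℕ)
    (hWV : W ⊆ V)
    (hBk : ∀ b ∈ B, b.card = k)
    (hpair : ∀ x ∈ V, ∀ y ∈ V, x ≠ y → (B.filter fun b => x ∈ b ∧ y ∈ b).card = 1)
    (x : alpha) (hx : x ∈ W)
    (cover : ∀ y ∈ W, y ≠ x → ∃ b ∈ B, x ∈ b ∧ y ∈ b ∧ b ⊆ W) :
    (B.filter fun b => x ∈ b ∧ b ⊆ W).card * (k - 1) = W.card - 1 := by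
  classical
  set F := B.filter fun b => x ∈ b ∧ b ⊆ W with hF
  have huniq : ∀ y ∈ V, y ≠ x → ∀ b₁ ∈ B, ∀ b₂ ∈ B,
      x ∈ b₁ → y ∈ b₁ → x ∈ b₂ → y ∈ b₂ → b₁ = b₂ := by
    intro y hy hyx b₁ hb₁ b₂ hb₂ hxb₁ hyb₁ hxb₂ hyb₂
    have h1 := hpair x (hWV hx) y hy (Ne.symm hyx)
    obtain ⟨a, ha⟩ := Finset.card_eq_one.mp h1
    have e1 : b₁ ∈ B.filter fun b => x ∈ b ∧ y ∈ b := by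
      simp [Finset.mem_filter, hb₁, hxb₁, hyb₁]
    have e2 : b₂ ∈ B.filter fun b => x ∈ b ∧ y ∈ b := by
      simp [Finset.mem_filter, hb₂, hxb₂, hyb₂]
    rw [ha, Finset.mem_singleton] at e1 e2
    rw [e1, e2]
  have hcup : W \ {x} = F.biUnion (fun b => b \ {x}) := by
    ext y
    simp only [Finset.mem_sdiff, Finset.mem_singleton, Finset.mem_biUnion, hF,
      Finset.mem_filter]
    constructor
    · rintro ⟨hyW, hyx⟩
      obtain ⟨b, hb, hxb, hyb, hbW⟩ := cover y hyW hyx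
      exact ⟨b, ⟨hb, hxb, hbW⟩, hyb, hyx⟩
    · rintro ⟨b, ⟨hb, hxb, hbW⟩, hyb, hyx⟩
      exact ⟨hbW hyb, hyx⟩
  have hdisj : ∀ b₁ ∈ F, ∀ b₂ ∈ F, b₁ ≠ b₂ →
      Disjoint (b₁ \ {x}) (b₂ \ {x}) := by
    intro b₁ hb₁ b₂ hb₂ hne
    rw [Finset.disjoint_left]
    intro y hy₁ hy₂
    simp only [Finset.mem_sdiff, Finset.mem_singleton] at hy₁ hy₂
    rw [hF, Finset.mem_filter] at hb₁ hb₂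
    exact hne (huniq y (hWV (hb₁.2.2 hy₁.1)) hy₁.2 b₁ hb₁.1 b₂ hb₂.1
      hb₁.2.1 hy₁.1 hb₂.2.1 hy₂.1)
  have hcard : (W \ {x}).card = ∑ b ∈ F, (b \ {x}).card := by
    rw [hcup, Finset.card_biUnion hdisj]
  have hbx : ∀ b ∈ F, (b \ {x}).card = k - 1 := by
    intro b hb
    rw [hF, Finset.mem_filter] at hb
    rw [Finset.card_sdiff_of_subset (Finset.singleton_subset_iff.mpr hb.2.1),
      Finset.card_singleton, hBk b hb.1]
  rw [Finset.card_sdiff_of_subset (Finset.singleton_subset_iff.mpr hx), Finset.card_singleton] at hcard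
  rw [hcard, Finset.sum_congr rfl hbx, Finset.sum_const, smul_eq_mul]

theorem stmt16
    {alpha : Type*} [DecidableEq alpha] (V : Finset alpha) (B : Finset (Finset alpha))
    (D : Finset (Finset alpha)) (v k v' l m : ℕ)
    (hk : 2 < k) (hk' : k < v') (hV : V.card = v)
    (hB : ∀ b ∈ B, b ⊆ V ∧ b.card = k)
    (hpair : ∀ x ∈ V, ∀ y ∈ V, x ≠ y → (B.filter fun b => x ∈ b ∧ y ∈ b).card = 1)
    (hDne : D.Nonempty)
    (hD : ∀ d ∈ D, d ⊆ V ∧ d.card = v' ∧ IsSubdesign B d)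
    (hmin : ∀ W ⊆ V, IsSubdesign B W → k < W.card → v' ≤ W.card)
    (hall : ∀ W ⊆ V, IsSubdesign B W → W.card = v' → W ∈ D)
    (hl : ∀ x ∈ V, (D.filter fun d => x ∈ d).card = l)
    (hm : ∀ b ∈ B, (D.filter fun d => b ⊆ d).card = m)
    (hv : (v : ℚ) < ((v' : ℚ) - 1) ^ 2 / ((k : ℚ) - 1) + 1) :
    (m : ℚ) ≤ (((v' : ℚ) - k) / ((k : ℚ) - 1)) /
      (((v' : ℚ) - 1) / ((k : ℚ) - 1) - ((v : ℚ) - 1) / ((v' : ℚ) - 1)) := by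
  classical
  have hBk : ∀ b ∈ B, b.card = k := fun b hb => (hB b hb).2
  obtain ⟨V₁, hV₁D⟩ := hDne
  obtain ⟨hV₁V, hV₁card, hV₁sub⟩ := hD V₁ hV₁D
  have hv'4 : 4 ≤ v' := by omega
  have hvv' : v' ≤ v := by
    rw [← hV, ← hV₁card]; exact Finset.card_le_card hV₁V
  obtain ⟨x, hx⟩ := Finset.card_pos.mp (by rw [hV₁card]; omega)
  have hxV : x ∈ V := hV₁V hx
  -- global uniqueness of blocks through two points
  have huniq : ∀ a ∈ V, ∀ y ∈ V, a ≠ y → ∀ b₁ ∈ B, ∀ b₂ ∈ B,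
      a ∈ b₁ → y ∈ b₁ → a ∈ b₂ → y ∈ b₂ → b₁ = b₂ := by
    intro a ha y hy hay b₁ hb₁ b₂ hb₂ hab₁ hyb₁ hab₂ hyb₂
    obtain ⟨c, hc⟩ := Finset.card_eq_one.mp (hpair a ha y hy hay)
    have e1 : b₁ ∈ B.filter fun b => a ∈ b ∧ y ∈ b := by
      simp [Finset.mem_filter, hb₁, hab₁, hyb₁]
    have e2 : b₂ ∈ B.filter fun b => a ∈ b ∧ y ∈ b := by
      simp [Finset.mem_filter, hb₂, hab₂, hyb₂]
    rw [hc, Finset.mem_singleton] at e1 e2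
    rw [e1, e2]
  -- r' : replication number inside V₁
  set F := B.filter fun b => x ∈ b ∧ b ⊆ V₁ with hFdef
  set r' := F.card with hr'def
  have hE2 : r' * (k - 1) = v' - 1 := by
    have := repl_lemma B V V₁ k hV₁V hBk hpair x hx
      (fun y hy hyx => by
        obtain ⟨b, hb, hxb, hyb, hbW⟩ := hV₁sub x hx y hy (Ne.symm hyx)
        exact ⟨b, hb, hxb, hyb, hbW⟩)
    rw [hV₁card] at this; exact this
  -- r : global replication number at x
  set r := (B.filter fun b => x ∈ b).card with hrdef
  have hfiltV : (B.filter fun b => x ∈ b ∧ b ⊆ V) = B.filter fun b => x ∈ b := by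
    apply Finset.filter_congr
    intro b hb
    simp [(hB b hb).1]
  have hE0 : r * (k - 1) = v - 1 := by
    have := repl_lemma B V V k (le_refl _) hBk hpair x hxV
      (fun y hy hyx => by
        have h1 := hpair x hxV y hy (Ne.symm hyx)
        obtain ⟨b, hb⟩ := Finset.card_pos.mp (by rw [h1]; norm_num)
        rw [Finset.mem_filter] at hb
        exact ⟨b, hb.1, hb.2.1, hb.2.2, (hB b hb.1).1⟩)
    rw [hV, hfiltV] at this; exact this
  -- double counting: l * (v' - 1) = m * (v - 1)
  have hsum : ∑ b ∈ B.filter (fun b => x ∈ b), (D.filter fun d => b ⊆ d).card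
      = ∑ d ∈ D, (B.filter fun b => x ∈ b ∧ b ⊆ d).card := by
    calc ∑ b ∈ B.filter (fun b => x ∈ b), (D.filter fun d => b ⊆ d).card
        = ∑ b ∈ B.filter (fun b => x ∈ b), ∑ d ∈ D, if b ⊆ d then 1 else 0 := by
          refine Finset.sum_congr rfl fun b _ => ?_
          rw [Finset.card_filter]
      _ = ∑ d ∈ D, ∑ b ∈ B.filter (fun b => x ∈ b), if b ⊆ d then 1 else 0 :=
          Finset.sum_comm
      _ = ∑ d ∈ D, (B.filter fun b => x ∈ b ∧ b ⊆ d).card := by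
          refine Finset.sum_congr rfl fun d _ => ?_
          rw [← Finset.filter_filter, Finset.card_filter]
  have hLHS : ∑ b ∈ B.filter (fun b => x ∈ b), (D.filter fun d => b ⊆ d).card = r * m := by
    rw [Finset.sum_congr rfl (fun b hb => hm b (Finset.mem_filter.mp hb).1),
      Finset.sum_const, smul_eq_mul]
  have hRHS : ∀ d ∈ D, (B.filter fun b => x ∈ b ∧ b ⊆ d).card * (k - 1)
      = if x ∈ d then v' - 1 else 0 := by
    intro d hd
    obtain ⟨hdV, hdcard, hdsub⟩ := hD d hd
    by_cases hxd : x ∈ d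
    · rw [if_pos hxd]
      have := repl_lemma B V d k hdV hBk hpair x hxd
        (fun y hy hyx => hdsub x hxd y hy (Ne.symm hyx))
      rw [hdcard] at this; exact this
    · rw [if_neg hxd]
      have : (B.filter fun b => x ∈ b ∧ b ⊆ d) = ∅ := by
        rw [Finset.filter_eq_empty_iff]
        intro b _ hb
        exact hxd (hb.2 hb.1)
      rw [this, Finset.card_empty, Nat.zero_mul]
  have hE1 : m * (v - 1) = l * (v' - 1) := by
    have step : r * m * (k - 1) = l * (v' - 1) := by
      rw [← hLHS, hsum, Finset.sum_mul]
      rw [Finset.sum_congr rfl hRHS, ← Finset.sum_filter, Finset.sum_const, smul_eq_mul,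
        hl x hxV]
    calc m * (v - 1) = m * (r * (k - 1)) := by rw [hE0]
      _ = r * m * (k - 1) := by ring
      _ = l * (v' - 1) := step
  -- m ≥ 1
  obtain ⟨y, hy, hyx⟩ := Finset.exists_mem_ne (by rw [hV₁card]; omega) x
  obtain ⟨b₀, hb₀B, hxb₀, hyb₀, hb₀V₁⟩ := hV₁sub x hx y hy (Ne.symm hyx)
  have hm1 : 1 ≤ m := by
    rw [← hm b₀ hb₀B]
    refine Finset.card_pos.mpr ⟨V₁, ?_⟩
    rw [Finset.mem_filter]
    exact ⟨hV₁D, hb₀V₁⟩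
  -- the set T of subdesigns ≠ V₁ through x meeting V₁ in a block
  set T := D.filter (fun d => d ≠ V₁ ∧ ∃ b ∈ F, b ⊆ d) with hTdef
  have hTcup : T = F.biUnion (fun b => D.filter fun d => d ≠ V₁ ∧ b ⊆ d) := by
    ext d
    simp only [hTdef, Finset.mem_filter, Finset.mem_biUnion]
    constructor
    · rintro ⟨hd, hne, b, hb, hbd⟩
      exact ⟨b, hb, hd, hne, hbd⟩
    · rintro ⟨b, hb, hd, hne, hbd⟩
      exact ⟨hd, hne, b, hb, hbd⟩
  have hTdisj : ∀ b₁ ∈ F, ∀ b₂ ∈ F, b₁ ≠ b₂ →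
      Disjoint (D.filter fun d => d ≠ V₁ ∧ b₁ ⊆ d) (D.filter fun d => d ≠ V₁ ∧ b₂ ⊆ d) := by
    intro b₁ hb₁ b₂ hb₂ hne
    rw [Finset.disjoint_left]
    intro d hd₁ hd₂
    rw [Finset.mem_filter] at hd₁ hd₂
    obtain ⟨hdD, hdne, hb₁d⟩ := hd₁
    obtain ⟨_, _, hb₂d⟩ := hd₂
    rw [hFdef, Finset.mem_filter] at hb₁ hb₂
    obtain ⟨hdV, hdcard, hdsub⟩ := hD d hdD
    -- d ∩ V₁ is a subdesign
    have hintsub : IsSubdesign B (d ∩ V₁) := by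
      intro u hu w hw huw
      rw [Finset.mem_inter] at hu hw
      obtain ⟨c₁, hc₁B, huc₁, hwc₁, hc₁d⟩ := hdsub u hu.1 w hw.1 huw
      obtain ⟨c₂, hc₂B, huc₂, hwc₂, hc₂V₁⟩ := hV₁sub u hu.2 w hw.2 huw
      have hceq : c₁ = c₂ := huniq u (hdV hu.1) w (hdV hw.1) huw c₁ hc₁B c₂ hc₂B
        huc₁ hwc₁ huc₂ hwc₂
      refine ⟨c₁, hc₁B, huc₁, hwc₁, ?_⟩
      intro z hz
      rw [Finset.mem_inter]
      exact ⟨hc₁d hz, hc₂V₁ (hceq ▸ hz)⟩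
    have hb12 : b₁ ∪ b₂ ⊆ d ∩ V₁ := by
      rw [Finset.union_subset_iff]
      constructor
      · intro z hz; rw [Finset.mem_inter]; exact ⟨hb₁d hz, hb₁.2.2 hz⟩
      · intro z hz; rw [Finset.mem_inter]; exact ⟨hb₂d hz, hb₂.2.2 hz⟩
    have hklt : k < (d ∩ V₁).card := by
      have hss : b₁ ⊂ b₁ ∪ b₂ := by
        refine Finset.ssubset_iff_subset_ne.mpr ⟨Finset.subset_union_left, ?_⟩
        intro heq
        have : b₂ ⊆ b₁ := by rw [heq]; exact Finset.subset_union_right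
        exact hne ((Finset.eq_of_subset_of_card_le this
          (by rw [hBk b₁ hb₁.1, hBk b₂ hb₂.1])).symm)
      have h1 : b₁.card < (b₁ ∪ b₂).card := Finset.card_lt_card hss
      have h2 : (b₁ ∪ b₂).card ≤ (d ∩ V₁).card := Finset.card_le_card hb12
      have h3 : b₁.card = k := hBk b₁ hb₁.1
      omega
    have hge : v' ≤ (d ∩ V₁).card :=
      hmin (d ∩ V₁) (fun z hz => hdV (Finset.mem_inter.mp hz).1) hintsub hklt
    have hle : (d ∩ V₁).card ≤ v' := by
      rw [← hV₁card]; exact Finset.card_le_card Finset.inter_subset_right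
    have hinteq : d ∩ V₁ = V₁ := Finset.eq_of_subset_of_card_le
      Finset.inter_subset_right (by omega)
    have : d = V₁ := by
      have hsub : V₁ ⊆ d := by rw [← hinteq]; exact Finset.inter_subset_left
      exact (Finset.eq_of_subset_of_card_le hsub (by rw [hdcard, hV₁card])).symm
    exact hdne this
  have hTcard : T.card = r' * (m - 1) := by
    rw [hTcup, Finset.card_biUnion hTdisj]
    have : ∀ b ∈ F, (D.filter fun d => d ≠ V₁ ∧ b ⊆ d).card = m - 1 := by
      intro b hb
      rw [hFdef, Finset.mem_filter] at hb
      have heq : (D.filter fun d => d ≠ V₁ ∧ b ⊆ d) = (D.filter fun d => b ⊆ d).erase V₁ := by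
        ext d
        simp only [Finset.mem_filter, Finset.mem_erase]
        tauto
      rw [heq, Finset.card_erase_of_mem, hm b hb.1]
      rw [Finset.mem_filter]
      exact ⟨hV₁D, hb.2.2⟩
    rw [Finset.sum_congr rfl this, Finset.sum_const, smul_eq_mul]
  -- main counting inequality: r'*(m-1) + 1 ≤ l
  have hIneq : r' * (m - 1) + 1 ≤ l := by
    rw [← hTcard, ← hl x hxV]
    have hsub : insert V₁ T ⊆ D.filter fun d => x ∈ d := by
      intro d hd
      rw [Finset.mem_insert] at hd
      rcases hd with rfl | hd
      · rw [Finset.mem_filter]; exact ⟨hV₁D, hx⟩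
      · rw [hTdef, Finset.mem_filter] at hd
        obtain ⟨hdD, _, b, hb, hbd⟩ := hd
        rw [hFdef, Finset.mem_filter] at hb
        rw [Finset.mem_filter]
        exact ⟨hdD, hbd hb.2.1⟩
    have hnotmem : V₁ ∉ T := by
      rw [hTdef, Finset.mem_filter]
      rintro ⟨_, hne, _⟩
      exact hne rfl
    have := Finset.card_le_card hsub
    rw [Finset.card_insert_of_notMem hnotmem] at this
    omega
  -- cast everything to ℚ
  have h1v : (1:ℕ) ≤ v := by omega
  have h1v' : (1:ℕ) ≤ v' := by omega
  have h1k : (1:ℕ) ≤ k := by omega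
  have q1 : (m:ℚ) * ((v:ℚ) - 1) = (l:ℚ) * ((v':ℚ) - 1) := by
    have := congrArg (fun n : ℕ => (n:ℚ)) hE1
    push_cast [Nat.cast_sub h1v, Nat.cast_sub h1v'] at this
    exact this
  have q2 : (r':ℚ) * ((k:ℚ) - 1) = (v':ℚ) - 1 := by
    have := congrArg (fun n : ℕ => (n:ℚ)) hE2
    push_cast [Nat.cast_sub h1k, Nat.cast_sub h1v'] at this
    exact this
  have q3 : (r':ℚ) * ((m:ℚ) - 1) + 1 ≤ (l:ℚ) := by
    have := hIneq
    have := (Nat.cast_le (α := ℚ)).mpr hIneq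
    push_cast [Nat.cast_sub hm1] at this
    exact this
  have qm : (1:ℚ) ≤ (m:ℚ) := by exact_mod_cast hm1
  have qk : (2:ℚ) < (k:ℚ) := by exact_mod_cast hk
  have qk' : (k:ℚ) < (v':ℚ) := by exact_mod_cast hk'
  have qv : (v':ℚ) ≤ (v:ℚ) := by exact_mod_cast hvv'
  have hkpos : (0:ℚ) < (k:ℚ) - 1 := by linarith
  have hv'pos : (0:ℚ) < (v':ℚ) - 1 := by linarith
  have h5 : ((v:ℚ) - 1) * ((k:ℚ) - 1) < ((v':ℚ) - 1) ^ 2 := by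
    rw [← lt_div_iff₀ hkpos]
    linarith
  have hA : 0 < ((v':ℚ) - 1) / ((k:ℚ) - 1) - ((v:ℚ) - 1) / ((v':ℚ) - 1) := by
    rw [sub_pos, div_lt_div_iff₀ hv'pos hkpos]
    nlinarith
  rw [le_div_iff₀ hA, le_div_iff₀ hkpos]
  have q1' : (l:ℚ) * (((v':ℚ) - 1) * ((k:ℚ) - 1)) = (m:ℚ) * (((v:ℚ) - 1) * ((k:ℚ) - 1)) := by
    linear_combination (-((k:ℚ)-1)) * q1
  have q3' : ((r':ℚ) * ((m:ℚ) - 1) + 1) * (((v':ℚ) - 1) * ((k:ℚ) - 1))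
      ≤ (l:ℚ) * (((v':ℚ) - 1) * ((k:ℚ) - 1)) :=
    mul_le_mul_of_nonneg_right q3 (le_of_lt (mul_pos hv'pos hkpos))
  have q2' : (r':ℚ) * ((k:ℚ) - 1) * (((m:ℚ) - 1) * ((v':ℚ) - 1))
      = ((v':ℚ) - 1) * (((m:ℚ) - 1) * ((v':ℚ) - 1)) := by rw [q2]
  have key : (m:ℚ) * (((v':ℚ) - 1) ^ 2 - ((v:ℚ) - 1) * ((k:ℚ) - 1))
      ≤ ((v':ℚ) - (k:ℚ)) * ((v':ℚ) - 1) := by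
    linarith [q1', q3', q2']
  refine (mul_le_mul_iff_of_pos_right hv'pos).mp ?_
  calc (m:ℚ) * (((v':ℚ) - 1) / ((k:ℚ) - 1) - ((v:ℚ) - 1) / ((v':ℚ) - 1)) * ((k:ℚ) - 1)
        * ((v':ℚ) - 1)
      = (m:ℚ) * ((((v':ℚ) - 1) / ((k:ℚ) - 1) - ((v:ℚ) - 1) / ((v':ℚ) - 1))
        * (((k:ℚ) - 1) * ((v':ℚ) - 1))) := by ring
    _ = (m:ℚ) * (((v':ℚ) - 1) ^ 2 - ((v:ℚ) - 1) * ((k:ℚ) - 1)) := by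
        congr 1
        field_simp
    _ ≤ ((v':ℚ) - (k:ℚ)) * ((v':ℚ) - 1) := key
end

section
/- Let (V,𝓑) be a (v,k,1)-BIBD that is not symmetric (i.e. v > k²−k+1, equivalently b > v). Then v ≥ k² and b ≥ v + k. -/
theorem stmt17
    {alpha : Type*} [DecidableEq alpha] (V : Finset alpha) (B : Finset (Finset alpha))
    (v k : ℕ) (hk : 2 < k) (hV : V.card = v)
    (hB : ∀ b ∈ B, b ⊆ V ∧ b.card = k)
    (hpair : ∀ x ∈ V, ∀ y ∈ V, x ≠ y → (B.filter fun b => x ∈ b ∧ y ∈ b).card = 1)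
    (hns : k ^ 2 - k + 1 < v) :
    k ^ 2 ≤ v ∧ v + k ≤ B.card := by
  have hkpos : 0 < k := by omega
  have hvpos : 0 < v := by nlinarith [Nat.sub_le (k^2) k]
  -- Step 1: double counting: B.card * (k*k - k) = v*v - v
  have hcount : B.card * (k * k - k) = v * v - v := by
    have h1 : ∑ b ∈ B, (V.offDiag.filter fun p => p.1 ∈ b ∧ p.2 ∈ b).card
        = ∑ p ∈ V.offDiag, (B.filter fun b => p.1 ∈ b ∧ p.2 ∈ b).card := by
      simp only [Finset.card_filter]
      rw [Finset.sum_comm]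
    have h2 : ∀ b ∈ B, (V.offDiag.filter fun p => p.1 ∈ b ∧ p.2 ∈ b).card = k * k - k := by
      intro b hb
      have hsub := (hB b hb).1
      have : (V.offDiag.filter fun p => p.1 ∈ b ∧ p.2 ∈ b) = b.offDiag := by
        ext p
        simp only [Finset.mem_filter, Finset.mem_offDiag]
        constructor
        · rintro ⟨⟨_, _, hne⟩, h1, h2⟩; exact ⟨h1, h2, hne⟩
        · rintro ⟨h1, h2, hne⟩; exact ⟨⟨hsub h1, hsub h2, hne⟩, h1, h2⟩
      rw [this, Finset.offDiag_card, (hB b hb).2]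
    have h3 : ∀ p ∈ V.offDiag, (B.filter fun b => p.1 ∈ b ∧ p.2 ∈ b).card = 1 := by
      intro p hp
      rw [Finset.mem_offDiag] at hp
      exact hpair p.1 hp.1 p.2 hp.2.1 hp.2.2
    calc B.card * (k * k - k) = ∑ b ∈ B, (k * k - k) := by rw [Finset.sum_const, smul_eq_mul, mul_comm]
      _ = ∑ b ∈ B, (V.offDiag.filter fun p => p.1 ∈ b ∧ p.2 ∈ b).card := (Finset.sum_congr rfl h2).symm
      _ = ∑ p ∈ V.offDiag, (B.filter fun b => p.1 ∈ b ∧ p.2 ∈ b).card := h1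
      _ = ∑ p ∈ V.offDiag, 1 := Finset.sum_congr rfl h3
      _ = V.offDiag.card := by simp
      _ = v * v - v := by rw [Finset.offDiag_card, hV]
  -- Step 2: (k-1) ∣ (v-1) via blocks through a point x
  obtain ⟨x, hx⟩ : ∃ x, x ∈ V := Finset.card_pos.mp (by omega) |>.imp fun _ h => h
  set Bx := B.filter fun b => x ∈ b with hBx
  have hdisj : ∀ b1 ∈ Bx, ∀ b2 ∈ Bx, b1 ≠ b2 → Disjoint (b1.erase x) (b2.erase x) := by
    intro b1 hb1 b2 hb2 hne
    rw [Finset.disjoint_left]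
    intro y hy1 hy2
    rw [Finset.mem_erase] at hy1 hy2
    simp only [hBx, Finset.mem_filter] at hb1 hb2
    have hyV : y ∈ V := (hB b1 hb1.1).1 hy1.2
    have hxy : x ≠ y := fun h => hy1.1 h.symm
    have hcard := hpair x hx y hyV hxy
    have h2le : 2 ≤ (B.filter fun b => x ∈ b ∧ y ∈ b).card := by
      have : {b1, b2} ⊆ B.filter fun b => x ∈ b ∧ y ∈ b := by
        intro c hc
        rcases Finset.mem_insert.mp hc with rfl | hc
        · exact Finset.mem_filter.mpr ⟨hb1.1, hb1.2, hy1.2⟩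
        · rw [Finset.mem_singleton] at hc; subst hc
          exact Finset.mem_filter.mpr ⟨hb2.1, hb2.2, hy2.2⟩
      calc 2 = ({b1, b2} : Finset (Finset alpha)).card := (Finset.card_pair hne).symm
        _ ≤ _ := Finset.card_le_card this
    omega
  have hunion : Bx.biUnion (fun b => b.erase x) = V.erase x := by
    ext y
    simp only [Finset.mem_biUnion, Finset.mem_erase, hBx, Finset.mem_filter]
    constructor
    · rintro ⟨b, ⟨hbB, hxb⟩, hyb, hy⟩
      exact ⟨hyb, (hB b hbB).1 hy⟩
    · rintro ⟨hyx, hyV⟩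
      have := hpair x hx y hyV (fun h => hyx h.symm)
      obtain ⟨b, hb⟩ := Finset.card_eq_one.mp this
      have hbmem : b ∈ B.filter fun b => x ∈ b ∧ y ∈ b := hb ▸ Finset.mem_singleton_self b
      rw [Finset.mem_filter] at hbmem
      exact ⟨b, ⟨hbmem.1, hbmem.2.1⟩, hyx, hbmem.2.2⟩
  have hrep : Bx.card * (k - 1) = v - 1 := by
    have := Finset.card_biUnion hdisj
    rw [hunion] at this
    rw [Finset.card_erase_of_mem hx, hV] at this
    have heq : ∀ b ∈ Bx, (b.erase x).card = k - 1 := by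
      intro b hb
      simp only [hBx, Finset.mem_filter] at hb
      rw [Finset.card_erase_of_mem hb.2, (hB b hb.1).2]
    rw [Finset.sum_congr rfl heq, Finset.sum_const, smul_eq_mul] at this
    omega
  -- Step 3: arithmetic, eliminating natural subtraction
  obtain ⟨m, rfl⟩ : ∃ m, k = m + 3 := ⟨k - 3, by omega⟩
  obtain ⟨r, hrB⟩ : ∃ r, Bx.card = r := ⟨_, rfl⟩
  rw [hrB] at hrep
  have hkk : (m + 3) - 1 = m + 2 := by omega
  rw [hkk] at hrep
  have hveq : v = r * (m + 2) + 1 := by omega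
  have hnsx : (m + 3) * (m + 2) + 1 < v := by
    have : (m + 3) ^ 2 - (m + 3) + 1 = (m + 3) * (m + 2) + 1 := by ring_nf; omega
    omega
  have hr : m + 4 ≤ r := by nlinarith
  have hv : (m + 3) ^ 2 ≤ v := by nlinarith
  refine ⟨hv, ?_⟩
  have e1 : (m + 3) * (m + 3) - (m + 3) = (m + 3) * (m + 2) := by ring_nf; omega
  have e2 : v * v - v = v * (r * (m + 2)) := by
    have h1 : v * v - v = v * (v - 1) := by rw [Nat.mul_sub, mul_one]
    rw [h1, ← hrep]
  rw [e1, e2] at hcount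
  rw [← mul_assoc, ← mul_assoc] at hcount
  have hcan : B.card * (m + 3) = v * r := Nat.eq_of_mul_eq_mul_right (by omega) hcount
  have : (v + (m + 3)) * (m + 3) ≤ B.card * (m + 3) := by
    rw [hcan]
    nlinarith
  exact Nat.le_of_mul_le_mul_right this (by omega)
end

section
/- Let (V,𝓑) be a (v,k,1)-BIBD with well-distributed minimal (v',k,1)-sub-BIBDs and suppose k ≥ 4. Then either v < ½(1 − √(1 − 4/k))·v'² + ½ or v > ½(1 + √(1 − 4/k))·v'² + ½. -/
lemma steiner_count {α : Type*} [DecidableEq α] (W : Finset α) (F : Finset (Finset α)) (k : ℕ)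
    (hF : ∀ b ∈ F, b ⊆ W ∧ b.card = k)
    (hp : ∀ x ∈ W, ∀ y ∈ W, x ≠ y → (F.filter fun b => x ∈ b ∧ y ∈ b).card = 1) :
    W.card * W.card - W.card = F.card * (k * k - k) := by
  have hdisj : (F : Set (Finset α)).PairwiseDisjoint (fun b => b.offDiag) := by
    intro b1 hb1 b2 hb2 hne
    refine Finset.disjoint_left.2 ?_
    intro p hp1 hp2
    simp only [Finset.mem_offDiag] at hp1 hp2
    have h1 : b1 ∈ F.filter fun b => p.1 ∈ b ∧ p.2 ∈ b :=
      Finset.mem_filter.2 ⟨Finset.mem_coe.1 hb1, hp1.1, hp1.2.1⟩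
    have h2 : b2 ∈ F.filter fun b => p.1 ∈ b ∧ p.2 ∈ b :=
      Finset.mem_filter.2 ⟨Finset.mem_coe.1 hb2, hp2.1, hp2.2.1⟩
    have hx : p.1 ∈ W := (hF b1 hb1).1 hp1.1
    have hy : p.2 ∈ W := (hF b1 hb1).1 hp1.2.1
    have := hp p.1 hx p.2 hy hp1.2.2
    have := Finset.card_le_one.1 (le_of_eq this) _ h1 _ h2
    exact hne this
  have hunion : W.offDiag = F.biUnion (fun b => b.offDiag) := by
    ext p
    simp only [Finset.mem_offDiag, Finset.mem_biUnion]
    constructor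
    · rintro ⟨hx, hy, hne⟩
      have := hp p.1 hx p.2 hy hne
      rw [Finset.card_eq_one] at this
      obtain ⟨b, hb⟩ := this
      have hbmem : b ∈ F.filter fun b => p.1 ∈ b ∧ p.2 ∈ b := hb ▸ Finset.mem_singleton_self b
      simp only [Finset.mem_filter] at hbmem
      exact ⟨b, hbmem.1, hbmem.2.1, hbmem.2.2, hne⟩
    · rintro ⟨b, hb, hx, hy, hne⟩
      exact ⟨(hF b hb).1 hx, (hF b hb).1 hy, hne⟩
  have := Finset.card_biUnion (fun b hb1 b2 hb2 hne => hdisj hb1 hb2 hne)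
  rw [← Finset.offDiag_card, hunion, this]
  rw [Finset.sum_congr rfl (fun b hb => by rw [Finset.offDiag_card, (hF b hb).2])]
  rw [Finset.sum_const, smul_eq_mul]

lemma double_count {α β : Type*} (S : Finset α) (T : Finset β) (P : α → β → Prop)
    [∀ x y, Decidable (P x y)] :
    ∑ x ∈ S, (T.filter fun y => P x y).card = ∑ y ∈ T, (S.filter fun x => P x y).card := by
  simp only [Finset.card_filter]
  exact Finset.sum_comm

set_option maxHeartbeats 1000000 in
theorem stmt18
    {alpha : Type*} [DecidableEq alpha] (V : Finset alpha) (B : Finset (Finset alpha))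
    (D : Finset (Finset alpha)) (v k v' l m : ℕ)
    (hk : 2 < k) (hk' : k < v') (hV : V.card = v)
    (hB : ∀ b ∈ B, b ⊆ V ∧ b.card = k)
    (hpair : ∀ x ∈ V, ∀ y ∈ V, x ≠ y → (B.filter fun b => x ∈ b ∧ y ∈ b).card = 1)
    (hDne : D.Nonempty)
    (hD : ∀ d ∈ D, d ⊆ V ∧ d.card = v' ∧ IsSubdesign B d)
    (hmin : ∀ W ⊆ V, IsSubdesign B W → k < W.card → v' ≤ W.card)
    (hall : ∀ W ⊆ V, IsSubdesign B W → W.card = v' → W ∈ D)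
    (hl : ∀ x ∈ V, (D.filter fun d => x ∈ d).card = l)
    (hm : ∀ b ∈ B, (D.filter fun d => b ⊆ d).card = m)
    (hk4 : 4 ≤ k) :
    (v : ℝ) < (1 - Real.sqrt (1 - 4 / (k : ℝ))) * (v' : ℝ) ^ 2 / 2 + 1 / 2 ∨
    (1 + Real.sqrt (1 - 4 / (k : ℝ))) * (v' : ℝ) ^ 2 / 2 + 1 / 2 < (v : ℝ) := by
  classical
  obtain ⟨d₀, hd₀⟩ := hDne
  obtain ⟨hd₀V, hd₀card, hd₀sub⟩ := hD d₀ hd₀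
  have hvv' : v' ≤ v := by
    rw [← hV, ← hd₀card]; exact Finset.card_le_card hd₀V
  -- number of blocks inside each subdesign
  have hnbd : ∀ d ∈ D, d.card * d.card - d.card = (B.filter fun b => b ⊆ d).card * (k * k - k) := by
    intro d hd
    obtain ⟨hdV, hdc, hds⟩ := hD d hd
    refine steiner_count d _ k (fun b hb => ?_) (fun x hx y hy hxy => ?_)
    · have := Finset.mem_filter.1 hb
      exact ⟨this.2, (hB b this.1).2⟩
    · obtain ⟨b, hbB, hxb, hyb, hbd⟩ := hds x hx y hy hxy
      have hglob := hpair x (hdV hx) y (hdV hy) hxy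
      have hsubs : ((B.filter fun b => b ⊆ d).filter fun b => x ∈ b ∧ y ∈ b) ⊆
          B.filter fun b => x ∈ b ∧ y ∈ b := by
        intro b' hb'
        simp only [Finset.mem_filter] at hb' ⊢
        exact ⟨hb'.1.1, hb'.2⟩
      have hmem : b ∈ ((B.filter fun b => b ⊆ d).filter fun b => x ∈ b ∧ y ∈ b) := by
        simp only [Finset.mem_filter]
        exact ⟨⟨hbB, hbd⟩, hxb, hyb⟩
      have h1 : 1 ≤ ((B.filter fun b => b ⊆ d).filter fun b => x ∈ b ∧ y ∈ b).card :=
        Finset.card_pos.2 ⟨b, hmem⟩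
      have h2 := Finset.card_le_card hsubs
      omega
  -- intersection structure
  have hint : ∀ d₁ ∈ D, ∀ d₂ ∈ D, d₁ ≠ d₂ →
      (d₁ ∩ d₂).card ≤ 1 ∨ ((d₁ ∩ d₂) ∈ B ∧ (d₁ ∩ d₂).card = k) := by
    intro d₁ hd₁ d₂ hd₂ hne
    obtain ⟨h1V, h1c, h1s⟩ := hD d₁ hd₁
    obtain ⟨h2V, h2c, h2s⟩ := hD d₂ hd₂
    set W := d₁ ∩ d₂ with hW_def
    have hWV : W ⊆ V := (Finset.inter_subset_left).trans h1V
    have hWsub : IsSubdesign B W := by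
      intro x hx y hy hxy
      have hx1 := Finset.mem_inter.1 hx
      have hy1 := Finset.mem_inter.1 hy
      obtain ⟨b1, hb1B, hxb1, hyb1, hb1d⟩ := h1s x hx1.1 y hy1.1 hxy
      obtain ⟨b2, hb2B, hxb2, hyb2, hb2d⟩ := h2s x hx1.2 y hy1.2 hxy
      have hglob := hpair x (hWV hx) y (hWV hy) hxy
      have hb1m : b1 ∈ B.filter fun b => x ∈ b ∧ y ∈ b := Finset.mem_filter.2 ⟨hb1B, hxb1, hyb1⟩
      have hb2m : b2 ∈ B.filter fun b => x ∈ b ∧ y ∈ b := Finset.mem_filter.2 ⟨hb2B, hxb2, hyb2⟩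
      have heq : b1 = b2 := Finset.card_le_one.1 (le_of_eq hglob) _ hb1m _ hb2m
      refine ⟨b1, hb1B, hxb1, hyb1, ?_⟩
      intro z hz
      exact Finset.mem_inter.2 ⟨hb1d hz, hb2d (heq ▸ hz)⟩
    by_cases hc : W.card ≤ 1
    · exact Or.inl hc
    push_neg at hc
    obtain ⟨x, hx, y, hy, hxy⟩ := Finset.one_lt_card.1 hc
    obtain ⟨b, hbB, hxb, hyb, hbW⟩ := hWsub x hx y hy hxy
    have hbk : b.card = k := (hB b hbB).2
    have hkW : k ≤ W.card := hbk ▸ Finset.card_le_card hbW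
    have hWk : W.card = k := by
      by_contra hWk
      have : v' ≤ W.card := hmin W hWV hWsub (by omega)
      have hWd1 : W ⊆ d₁ := Finset.inter_subset_left
      have : W = d₁ := Finset.eq_of_subset_of_card_le hWd1 (by omega)
      have hd12 : d₁ ⊆ d₂ := this ▸ Finset.inter_subset_right
      exact hne (Finset.eq_of_subset_of_card_le hd12 (by omega))
    have : b = W := Finset.eq_of_subset_of_card_le hbW (by omega)
    exact Or.inr ⟨this ▸ hbB, hWk⟩
  -- counting l : v * l = D.card * v'
  have hlcount : v * l = D.card * v' := by
    have hswap := double_count V D (fun x d => x ∈ d)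
    have hL : ∑ x ∈ V, (D.filter fun d => x ∈ d).card = v * l := by
      rw [Finset.sum_congr rfl (fun x hx => hl x hx), Finset.sum_const, smul_eq_mul, hV]
    have hR : ∑ d ∈ D, (V.filter fun x => x ∈ d).card = D.card * v' := by
      rw [Finset.sum_congr rfl (fun d hd => by
        rw [Finset.filter_mem_eq_inter, Finset.inter_eq_right.2 (hD d hd).1, (hD d hd).2.1]),
        Finset.sum_const, smul_eq_mul]
    rw [← hL, hswap, hR]
  -- counting m : m * (v*v - v) = D.card * (v'*v' - v')
  have hmcount : m * (v * v - v) = D.card * (v' * v' - v') := by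
    have hsv : v * v - v = B.card * (k * k - k) := by
      rw [← hV]
      exact steiner_count V B k hB (fun x hx y hy hxy => hpair x hx y hy hxy)
    have hswap := double_count B D (fun b d => b ⊆ d)
    have hL : ∑ b ∈ B, (D.filter fun d => b ⊆ d).card = B.card * m := by
      rw [Finset.sum_congr rfl (fun b hb => hm b hb), Finset.sum_const, smul_eq_mul]
    have hR : (∑ d ∈ D, (B.filter fun b => b ⊆ d).card) * (k * k - k)
        = D.card * (v' * v' - v') := by
      rw [Finset.sum_mul, Finset.sum_congr rfl (fun d hd => by
        rw [← hnbd d hd, (hD d hd).2.1]), Finset.sum_const, smul_eq_mul]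
    calc m * (v * v - v) = B.card * m * (k * k - k) := by rw [hsv]; ring
    _ = (∑ b ∈ B, (D.filter fun d => b ⊆ d).card) * (k * k - k) := by rw [hL]
    _ = D.card * (v' * v' - v') := by rw [hswap, hR]
  set nb := (B.filter fun b => b ⊆ d₀).card with hnb_def
  have hnb : v' * v' - v' = nb * (k * k - k) := by
    rw [← hd₀card]; exact hnbd d₀ hd₀
  set D' := D.erase d₀ with hD'_def
  set Aset := D'.filter (fun d => (d₀ ∩ d).card = 1) with hA_def
  set Cset := D'.filter (fun d => (d₀ ∩ d).card = k) with hC_def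
  -- S1 + split
  have hcases : ∀ d ∈ D', (d₀ ∩ d).card = 0 ∨ (d₀ ∩ d).card = 1 ∨ (d₀ ∩ d).card = k := by
    intro d hd
    have hdD : d ∈ D := Finset.mem_of_mem_erase hd
    have hne : d₀ ≠ d := (Finset.ne_of_mem_erase hd).symm
    rcases hint d₀ hd₀ d hdD hne with h | h
    · omega
    · exact Or.inr (Or.inr h.2)
  have hS2 : Aset.card + k * Cset.card + v' = v' * l := by
    have hstep1 : ∑ x ∈ d₀, (D.filter fun d => x ∈ d).card = v' * l := by
      rw [Finset.sum_congr rfl (fun x hx => hl x (hd₀V hx)), Finset.sum_const, smul_eq_mul,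
        hd₀card, mul_comm]
    have hstep2 : ∀ x ∈ d₀, (D.filter fun d => x ∈ d).card
        = (D'.filter fun d => x ∈ d).card + 1 := by
      intro x hx
      rw [hD'_def, Finset.filter_erase]
      exact (Finset.card_erase_add_one (Finset.mem_filter.2 ⟨hd₀, hx⟩)).symm
    have hstep3 : ∑ x ∈ d₀, (D'.filter fun d => x ∈ d).card = ∑ d ∈ D', (d₀ ∩ d).card := by
      rw [double_count d₀ D' (fun x d => x ∈ d)]
      exact Finset.sum_congr rfl (fun d hd => by rw [Finset.filter_mem_eq_inter])
    have hsum : ∑ d ∈ D', (d₀ ∩ d).card = Aset.card + k * Cset.card := by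
      rw [← Finset.sum_filter_add_sum_filter_not D' (fun d => (d₀ ∩ d).card = 1)
        (fun d => (d₀ ∩ d).card)]
      have h1 : ∑ d ∈ D'.filter (fun d => (d₀ ∩ d).card = 1), (d₀ ∩ d).card = Aset.card := by
        rw [Finset.sum_congr rfl (fun d hd => (Finset.mem_filter.1 hd).2), Finset.sum_const,
          smul_eq_mul, mul_one]
      have hCeq : (D'.filter (fun d => ¬(d₀ ∩ d).card = 1)).filter
          (fun d => (d₀ ∩ d).card = k) = Cset := by
        ext d
        simp only [Finset.mem_filter, hC_def]
        constructor
        · rintro ⟨⟨hd1, _⟩, h3⟩; exact ⟨hd1, h3⟩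
        · rintro ⟨hd1, h3⟩; exact ⟨⟨hd1, by omega⟩, h3⟩
      have h2 : ∑ d ∈ D'.filter (fun d => ¬(d₀ ∩ d).card = 1), (d₀ ∩ d).card
          = k * Cset.card := by
        rw [← Finset.sum_filter_add_sum_filter_not (D'.filter (fun d => ¬(d₀ ∩ d).card = 1))
          (fun d => (d₀ ∩ d).card = k) (fun d => (d₀ ∩ d).card)]
        have hz : ∑ d ∈ (D'.filter (fun d => ¬(d₀ ∩ d).card = 1)).filter
            (fun d => ¬(d₀ ∩ d).card = k), (d₀ ∩ d).card = 0 := by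
          refine Finset.sum_eq_zero (fun d hd => ?_)
          simp only [Finset.mem_filter] at hd
          have := hcases d hd.1.1
          omega
        rw [hz, add_zero, hCeq, Finset.sum_congr rfl (fun d hd => (Finset.mem_filter.1 hd).2),
          Finset.sum_const, smul_eq_mul, mul_comm]
      rw [h1, h2]
    have := hstep1
    rw [Finset.sum_congr rfl hstep2, Finset.sum_add_distrib, Finset.sum_const, smul_eq_mul,
      mul_one, hstep3, hsum, hd₀card] at this
    omega
  -- S3
  have hS3 : Cset.card + nb = nb * m := by
    have hstep1 : ∑ b ∈ B.filter (fun b => b ⊆ d₀), (D.filter fun d => b ⊆ d).card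
        = nb * m := by
      rw [Finset.sum_congr rfl (fun b hb => hm b (Finset.mem_filter.1 hb).1),
        Finset.sum_const, smul_eq_mul]
    have hstep2 : ∀ b ∈ B.filter (fun b => b ⊆ d₀), (D.filter fun d => b ⊆ d).card
        = (D'.filter fun d => b ⊆ d).card + 1 := by
      intro b hb
      rw [hD'_def, Finset.filter_erase]
      exact (Finset.card_erase_add_one
        (Finset.mem_filter.2 ⟨hd₀, (Finset.mem_filter.1 hb).2⟩)).symm
    have hstep3 : ∑ b ∈ B.filter (fun b => b ⊆ d₀), (D'.filter fun d => b ⊆ d).card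
        = ∑ d ∈ D', ((B.filter (fun b => b ⊆ d₀)).filter fun b => b ⊆ d).card :=
      double_count (B.filter (fun b => b ⊆ d₀)) D' (fun b d => b ⊆ d)
    have hstep4 : ∀ d ∈ D', ((B.filter (fun b => b ⊆ d₀)).filter fun b => b ⊆ d).card
        = if (d₀ ∩ d).card = k then 1 else 0 := by
      intro d hd
      have hdD : d ∈ D := Finset.mem_of_mem_erase hd
      have hne : d₀ ≠ d := (Finset.ne_of_mem_erase hd).symm
      by_cases hck : (d₀ ∩ d).card = k
      · rw [if_pos hck]
        rcases hint d₀ hd₀ d hdD hne with h | h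
        · omega
        · have heq : (B.filter (fun b => b ⊆ d₀)).filter (fun b => b ⊆ d) = {d₀ ∩ d} := by
            ext b
            simp only [Finset.mem_filter, Finset.mem_singleton]
            constructor
            · rintro ⟨⟨hbB, hb0⟩, hbd⟩
              exact Finset.eq_of_subset_of_card_le (Finset.subset_inter hb0 hbd)
                (by rw [hck, (hB b hbB).2])
            · rintro rfl
              exact ⟨⟨h.1, Finset.inter_subset_left⟩, Finset.inter_subset_right⟩
          rw [heq, Finset.card_singleton]
      · rw [if_neg hck]
        rw [Finset.card_eq_zero]
        refine Finset.filter_eq_empty_iff.2 (fun b hb => ?_)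
        intro hbd
        obtain ⟨hbB, hb0⟩ := Finset.mem_filter.1 hb
        have hsub : b ⊆ d₀ ∩ d := Finset.subset_inter hb0 hbd
        have hle : k ≤ (d₀ ∩ d).card := (hB b hbB).2 ▸ Finset.card_le_card hsub
        have := hcases d hd
        omega
    have := hstep1
    rw [Finset.sum_congr rfl hstep2, Finset.sum_add_distrib, Finset.sum_const, smul_eq_mul,
      mul_one, hstep3, Finset.sum_congr rfl hstep4, ← Finset.card_filter] at this
    exact this
  have hF6 : Aset.card + Cset.card + 1 ≤ D.card := by
    have hdisjAC : Disjoint Aset Cset := by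
      rw [Finset.disjoint_left]
      intro d hdA hdC
      have h1 := (Finset.mem_filter.1 hdA).2
      have h2 := (Finset.mem_filter.1 hdC).2
      omega
    have hsub : Aset ∪ Cset ⊆ D' := Finset.union_subset (Finset.filter_subset _ _)
      (Finset.filter_subset _ _)
    have hcard := Finset.card_le_card hsub
    rw [Finset.card_union_of_disjoint hdisjAC] at hcard
    have hD'card : D'.card = D.card - 1 := Finset.card_erase_of_mem hd₀
    have hDpos : 1 ≤ D.card := Finset.card_pos.2 ⟨d₀, hd₀⟩
    omega
  -- integer inequality
  have hT : (1 : ℤ) ≤ k * ((v : ℤ) - 1) * ((v : ℤ) - (v' : ℤ) * v') + (v' : ℤ) * v' * ((v' : ℤ) - 1) * ((v' : ℤ) - 1) := by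
    have hv'5 : 5 ≤ v' := by omega
    have hv5 : 5 ≤ v := by omega
    have hle1 : v ≤ v * v := Nat.le_mul_of_pos_left v (by omega)
    have hle2 : v' ≤ v' * v' := Nat.le_mul_of_pos_left v' (by omega)
    have hle3 : k ≤ k * k := Nat.le_mul_of_pos_left k (by omega)
    have hnb1 : 1 ≤ nb := by
      rcases Nat.eq_zero_or_pos nb with h | h
      · exfalso
        rw [h, zero_mul] at hnb
        have h2 : 2 * v' ≤ v' * v' := Nat.mul_le_mul_right v' (by omega)
        omega
      · exact h
    have hm1 : 1 ≤ m := by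
      rcases Nat.eq_zero_or_pos m with h | h
      · exfalso; rw [h, mul_zero] at hS3; omega
      · exact h
    zify [hle1, hle2, hle3] at hmcount hnb
    zify at hlcount hS2 hS3 hF6 hm1
    have h1 : (D.card : ℤ) * ((v' : ℤ) * ((v' : ℤ) - 1)) = (m : ℤ) * ((v : ℤ) * ((v : ℤ) - 1)) := by
      linear_combination -hmcount
    have h2 : (l : ℤ) * v = (D.card : ℤ) * v' := by linear_combination hlcount
    have h3 : (Cset.card : ℤ) * ((k : ℤ) * ((k : ℤ) - 1))
        = ((m : ℤ) - 1) * ((v' : ℤ) * ((v' : ℤ) - 1)) := by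
      linear_combination ((k : ℤ) * k - k) * hS3 + (1 - (m : ℤ)) * hnb
    have h4 : (Aset.card : ℤ) + (k : ℤ) * Cset.card + (v' : ℤ) = (v' : ℤ) * l := by
      linear_combination hS2
    set n : ℤ := (D.card : ℤ)
    set a : ℤ := (Aset.card : ℤ)
    set c : ℤ := (Cset.card : ℤ)
    set w : ℤ := (v' : ℤ)
    have key : (v : ℤ) * ((m : ℤ) * ((k : ℤ) * ((v : ℤ) - 1) * ((v : ℤ) - w * w) + w * w * (w - 1) * (w - 1)))
        = (k : ℤ) * v * w * (w - 1) * (n - 1 - a - c) + (v : ℤ) * w * (w - 1) ^ 2 * (w - (k : ℤ)) := by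
      linear_combination ((k : ℤ) * w ^ 2 - (k : ℤ) * v) * h1 + ((k : ℤ) * w ^ 2 * (w - 1)) * h2
        + (-((v : ℤ) * w * (w - 1))) * h3 + ((k : ℤ) * v * w * (w - 1)) * h4
    have hE : (0 : ℤ) ≤ n - 1 - a - c := by
      have := hF6; omega
    have hwk : (k : ℤ) + 1 ≤ w := by simp only [w]; omega
    have hw5 : (5 : ℤ) ≤ w := by simp only [w]; omega
    have hv5' : (5 : ℤ) ≤ (v : ℤ) := by omega
    have hk4' : (4 : ℤ) ≤ (k : ℤ) := by omega
    by_contra hcon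
    push_neg at hcon
    have hTle : (k : ℤ) * ((v : ℤ) - 1) * ((v : ℤ) - w * w) + w * w * (w - 1) * (w - 1) ≤ 0 := by
      omega
    have hlhs : (v : ℤ) * ((m : ℤ) * ((k : ℤ) * ((v : ℤ) - 1) * ((v : ℤ) - w * w) + w * w * (w - 1) * (w - 1))) ≤ 0 := by
      apply mul_nonpos_of_nonneg_of_nonpos (by positivity)
      exact mul_nonpos_of_nonneg_of_nonpos (by positivity) hTle
    have hrhs1 : (0 : ℤ) ≤ (k : ℤ) * v * w * (w - 1) * (n - 1 - a - c) := by
      apply mul_nonneg _ hE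
      apply mul_nonneg (mul_nonneg (mul_nonneg (by positivity) (by positivity)) (by linarith))
      linarith
    have hrhs2 : (0 : ℤ) < (v : ℤ) * w * (w - 1) ^ 2 * (w - (k : ℤ)) := by
      apply mul_pos
      · apply mul_pos (mul_pos (by linarith) (by linarith))
        nlinarith [hw5]
      · linarith
    linarith
  -- real part
  have hTR : (1 : ℝ) ≤ (k : ℝ) * ((v : ℝ) - 1) * ((v : ℝ) - (v' : ℝ) * v')
      + (v' : ℝ) * v' * ((v' : ℝ) - 1) * ((v' : ℝ) - 1) := by exact_mod_cast hT
  set s : ℝ := Real.sqrt (1 - 4 / (k : ℝ)) with hs_def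
  have hkR : (4 : ℝ) ≤ (k : ℝ) := by exact_mod_cast hk4
  have hkpos : (0 : ℝ) < (k : ℝ) := by linarith
  have hnneg : (0 : ℝ) ≤ 1 - 4 / (k : ℝ) := by
    rw [sub_nonneg, div_le_one hkpos]; exact hkR
  have hs0 : 0 ≤ s := Real.sqrt_nonneg _
  have hsq : s ^ 2 = 1 - 4 / (k : ℝ) := Real.sq_sqrt hnneg
  have hks : (k : ℝ) * s ^ 2 = (k : ℝ) - 4 := by
    rw [hsq]; field_simp
  by_contra hcon
  push_neg at hcon
  obtain ⟨hA, hB⟩ := hcon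
  set w : ℝ := (v' : ℝ) with hw_def
  have hwk : (k : ℝ) + 1 ≤ w := by
    rw [hw_def]
    have h1 : ((k + 1 : ℕ) : ℝ) ≤ ((v' : ℕ) : ℝ) := by exact_mod_cast hk'
    push_cast at h1
    linarith
  have hw5 : (5 : ℝ) ≤ w := by linarith
  have key : ((v : ℝ) - (w ^ 2 + 1) / 2) ^ 2 ≤ (s * w ^ 2 / 2) ^ 2 := by
    apply sq_le_sq'
    · linarith
    · linarith
  have hmul : (k : ℝ) * (((v : ℝ) - (w ^ 2 + 1) / 2) ^ 2) ≤ (k : ℝ) * ((s * w ^ 2 / 2) ^ 2) :=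
    mul_le_mul_of_nonneg_left key (le_of_lt hkpos)
  have hks4 : (k : ℝ) * s ^ 2 * w ^ 4 = ((k : ℝ) - 4) * w ^ 4 := by
    linear_combination w ^ 4 * hks
  have hfin : (0 : ℝ) ≤ (w - 1 - (k : ℝ)) * (2 * w ^ 2 - 1) := by
    apply mul_nonneg (by linarith)
    nlinarith [hw5]
  nlinarith [hTR, hmul, hks4, hfin, hw5, sq_nonneg w, sq_nonneg (w - 1), sq_nonneg (w ^ 2 - 1)]
end

section
/- Let (V,𝓑) be a (v,k,1)-BIBD with well-distributed minimal (v',k,1)-sub-BIBDs such that no two distinct minimal subdesigns intersect in exactly one vertex. Then n < b, where n is the number of minimal subdesigns and b the number of blocks. -/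
lemma aux_sum_comm {β γ : Type*} (s : Finset β) (t : Finset γ)
    (r : β → γ → Prop) [∀ a b, Decidable (r a b)] :
    ∑ a ∈ s, (t.filter (fun b => r a b)).card = ∑ b ∈ t, (s.filter (fun a => r a b)).card := by
  simp only [Finset.card_filter]
  exact Finset.sum_comm

lemma aux_arith (K V' M Vv L R : ℤ)
    (hK : 3 ≤ K) (hK' : K + 1 ≤ V') (hM : 1 ≤ M)
    (hfis : K * (K - 1) ≤ V' - 1)
    (hF : M * (V' - K) + K ≤ Vv)
    (hA : L * (V' - 1) = M * (Vv - 1))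
    (hB : R * (K - 1) = Vv - 1)
    (hC : L * L - L = R * (M * M - M)) :
    M * (K * (K - 1)) < V' * (V' - 1) := by
  have hV1 : 0 < Vv - 1 := by nlinarith
  have hK1 : (0:ℤ) < K - 1 := by linarith
  have hVK : (0:ℤ) < V' - K := by linarith
  have hV'1 : (0:ℤ) < V' - 1 := by linarith
  have hcan : (M*(Vv-1)*(K-1) - (V'-1)*(K-1) - (M-1)*(V'-1)^2) * (M*(Vv-1)) = 0 := by
    linear_combination ((V'-1)^2*(M*M-M)) * hB + ((K-1)*(V'-1)^2) * hC
      - (K-1)*(L*(V'-1) + M*(Vv-1) - (V'-1)) * hA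
  have hMV : M * (Vv - 1) ≠ 0 := ne_of_gt (mul_pos (by linarith) hV1)
  have hE : M*(Vv-1)*(K-1) - (V'-1)*(K-1) = (M-1)*(V'-1)^2 := by
    rcases mul_eq_zero.mp hcan with h | h
    · linarith
    · exact absurd h hMV
  have step2 : (Vv-1)*(K-1) < (V'-1)^2 := by
    nlinarith [mul_pos hV'1 hVK]
  have h3 : M*(V'-K)*(K-1) < (V'-K)*(V'+K-2) := by
    nlinarith [mul_le_mul_of_nonneg_right hF (le_of_lt hK1)]
  have h4 : M*(K-1) < V' + K - 2 := by
    have h3' : (V'-K) * (M*(K-1)) < (V'-K) * (V'+K-2) := by nlinarith [h3]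
    exact lt_of_mul_lt_mul_left h3' (le_of_lt hVK)
  nlinarith [mul_nonneg (show (0:ℤ) ≤ V' by linarith)
      (show (0:ℤ) ≤ V' - K - 1 - K*K + 2*K by nlinarith),
    mul_nonneg (show (0:ℤ) ≤ V' - 1 by linarith)
      (show (0:ℤ) ≤ K*(K-2) by nlinarith)]

set_option maxHeartbeats 1000000 in
theorem stmt19
    {alpha : Type*} [DecidableEq alpha] (V : Finset alpha) (B : Finset (Finset alpha))
    (D : Finset (Finset alpha)) (v k v' l m : ℕ)
    (hk : 2 < k) (hk' : k < v') (hV : V.card = v)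
    (hB : ∀ b ∈ B, b ⊆ V ∧ b.card = k)
    (hpair : ∀ x ∈ V, ∀ y ∈ V, x ≠ y → (B.filter fun b => x ∈ b ∧ y ∈ b).card = 1)
    (hDne : D.Nonempty)
    (hD : ∀ d ∈ D, d ⊆ V ∧ d.card = v' ∧ IsSubdesign B d)
    (hmin : ∀ W ⊆ V, IsSubdesign B W → k < W.card → v' ≤ W.card)
    (hall : ∀ W ⊆ V, IsSubdesign B W → W.card = v' → W ∈ D)
    (hl : ∀ x ∈ V, (D.filter fun d => x ∈ d).card = l)
    (hm : ∀ b ∈ B, (D.filter fun d => b ⊆ d).card = m)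
    (hno1 : ∀ d₁ ∈ D, ∀ d₂ ∈ D, d₁ ≠ d₂ → (d₁ ∩ d₂).card ≠ 1) :
    D.card < B.card := by
  classical
  obtain ⟨d₀, hd₀D⟩ := hDne
  obtain ⟨hd₀V, hd₀card, hd₀sub⟩ := hD d₀ hd₀D
  -- uniqueness of block through two points
  have huniq : ∀ x ∈ V, ∀ y ∈ V, x ≠ y → ∀ b ∈ B, ∀ b' ∈ B,
      x ∈ b → y ∈ b → x ∈ b' → y ∈ b' → b = b' := by
    intro x hx y hy hxy b hb b' hb' h1 h2 h3 h4
    have h := hpair x hx y hy hxy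
    have hle := Finset.card_le_one.mp h.le
    exact hle _ (Finset.mem_filter.mpr ⟨hb, h1, h2⟩) _ (Finset.mem_filter.mpr ⟨hb', h3, h4⟩)
  -- existence of block through two points
  have hex : ∀ x ∈ V, ∀ y ∈ V, x ≠ y → ∃ b ∈ B, x ∈ b ∧ y ∈ b := by
    intro x hx y hy hxy
    have h := hpair x hx y hy hxy
    obtain ⟨c, hc⟩ := Finset.card_pos.mp
      (show 0 < (B.filter fun b => x ∈ b ∧ y ∈ b).card by omega)
    have := Finset.mem_filter.mp hc
    exact ⟨c, this.1, this.2⟩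
  -- intersection of two distinct designs meeting in ≥ 2 points is a block
  have hinter : ∀ d₁ ∈ D, ∀ d₂ ∈ D, d₁ ≠ d₂ → 2 ≤ (d₁ ∩ d₂).card → (d₁ ∩ d₂) ∈ B := by
    intro d₁ h1 d₂ h2 hne hcard2
    obtain ⟨h1V, h1c, h1s⟩ := hD d₁ h1
    obtain ⟨h2V, h2c, h2s⟩ := hD d₂ h2
    have hsub : IsSubdesign B (d₁ ∩ d₂) := by
      intro x hx y hy hxy
      have hx1 := (Finset.mem_inter.mp hx).1
      have hx2 := (Finset.mem_inter.mp hx).2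
      have hy1 := (Finset.mem_inter.mp hy).1
      have hy2 := (Finset.mem_inter.mp hy).2
      obtain ⟨b, hb, hxb, hyb, hbd⟩ := h1s x hx1 y hy1 hxy
      obtain ⟨b', hb', hxb', hyb', hbd'⟩ := h2s x hx2 y hy2 hxy
      have heq : b = b' := huniq x (h1V hx1) y (h1V hy1) hxy b hb b' hb' hxb hyb hxb' hyb'
      refine ⟨b, hb, hxb, hyb, Finset.subset_inter hbd (heq ▸ hbd')⟩
    obtain ⟨x, hx, y, hy, hxy⟩ := Finset.one_lt_card.mp hcard2
    obtain ⟨b, hb, hxb, hyb, hbd⟩ := hsub x hx y hy hxy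
    have hbk := (hB b hb).2
    have hkle : k ≤ (d₁ ∩ d₂).card := hbk ▸ Finset.card_le_card hbd
    rcases eq_or_lt_of_le hkle with heq | hlt
    · have : b = d₁ ∩ d₂ := Finset.eq_of_subset_of_card_le hbd (by omega)
      rw [← this]; exact hb
    · exfalso
      have hVsub : d₁ ∩ d₂ ⊆ V := fun z hz => h1V (Finset.mem_inter.mp hz).1
      have hv'le := hmin _ hVsub hsub hlt
      have e1 : d₁ ∩ d₂ = d₁ :=
        Finset.eq_of_subset_of_card_le Finset.inter_subset_left (by omega)
      have e2 : d₁ ∩ d₂ = d₂ :=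
        Finset.eq_of_subset_of_card_le Finset.inter_subset_right (by omega)
      exact hne (e1 ▸ e2)
  -- two distinct designs containing a block meet exactly in it
  have hcap : ∀ b ∈ B, ∀ d₁ ∈ D, ∀ d₂ ∈ D, d₁ ≠ d₂ → b ⊆ d₁ → b ⊆ d₂ → d₁ ∩ d₂ = b := by
    intro b hb d₁ h1 d₂ h2 hne hs1 hs2
    have hbsub : b ⊆ d₁ ∩ d₂ := Finset.subset_inter hs1 hs2
    have hbk := (hB b hb).2
    have h2le : 2 ≤ (d₁ ∩ d₂).card := le_trans (by omega) (Finset.card_le_card hbsub)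
    have hmem := hinter d₁ h1 d₂ h2 hne h2le
    have hck := (hB _ hmem).2
    exact (Finset.eq_of_subset_of_card_le hbsub (by omega)).symm
  -- a block inside d₀, basic positivity
  have hd2 : ∃ x ∈ d₀, ∃ y ∈ d₀, x ≠ y := Finset.one_lt_card.mp (by omega)
  obtain ⟨x₁, hx₁, y₁, hy₁, hxy₁⟩ := hd2
  obtain ⟨b₀, hb₀B, hx₁b₀, hy₁b₀, hb₀d₀⟩ := hd₀sub x₁ hx₁ y₁ hy₁ hxy₁
  have hb₀V := (hB b₀ hb₀B).1
  have hb₀k := (hB b₀ hb₀B).2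
  have hm1 : 1 ≤ m := by
    rw [← hm b₀ hb₀B]
    exact Finset.card_pos.mpr ⟨d₀, Finset.mem_filter.mpr ⟨hd₀D, hb₀d₀⟩⟩
  have hBne : B.Nonempty := ⟨b₀, hb₀B⟩
  have hv'v : v' ≤ v := by rw [← hV, ← hd₀card]; exact Finset.card_le_card hd₀V
  have hkv : k ≤ v := by omega
  have hx₁V : x₁ ∈ V := hd₀V hx₁
  -- Fisher-type bound: k*(k-1)+1 ≤ v'
  have hfisher : k * (k - 1) + 1 ≤ v' := by
    have hne' : (d₀ \ b₀).Nonempty := by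
      rw [← Finset.card_pos, Finset.card_sdiff_of_subset hb₀d₀]; omega
    obtain ⟨x, hx⟩ := hne'
    have hxd₀ : x ∈ d₀ := (Finset.mem_sdiff.mp hx).1
    have hxb₀ : x ∉ b₀ := (Finset.mem_sdiff.mp hx).2
    have hxV : x ∈ V := hd₀V hxd₀
    set Bx := B.filter (fun c => x ∈ c ∧ c ⊆ d₀) with hBx
    have hdisj : ∀ c₁ ∈ Bx, ∀ c₂ ∈ Bx, c₁ ≠ c₂ → Disjoint (c₁.erase x) (c₂.erase x) := by
      intro c₁ hc₁ c₂ hc₂ hne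
      obtain ⟨hc₁B, hxc₁, _⟩ := Finset.mem_filter.mp hc₁
      obtain ⟨hc₂B, hxc₂, _⟩ := Finset.mem_filter.mp hc₂
      rw [Finset.disjoint_left]
      intro z hz hz2
      have hz1 := Finset.mem_erase.mp hz
      have hz2' := Finset.mem_erase.mp hz2
      exact hne (huniq x hxV z ((hB _ hc₁B).1 hz1.2) (Ne.symm hz1.1) c₁ hc₁B c₂ hc₂B
        hxc₁ hz1.2 hxc₂ hz2'.2)
    have hcover : Bx.biUnion (fun c => c.erase x) = d₀.erase x := by
      ext z
      simp only [Finset.mem_biUnion, Finset.mem_erase, hBx, Finset.mem_filter]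
      constructor
      · rintro ⟨c, ⟨hcB, hxc, hcd⟩, hzx, hzc⟩
        exact ⟨hzx, hcd hzc⟩
      · rintro ⟨hzx, hzd⟩
        obtain ⟨c, hcB, hxc, hzc, hcd⟩ := hd₀sub x hxd₀ z hzd (Ne.symm hzx)
        exact ⟨c, ⟨hcB, hxc, hcd⟩, hzx, hzc⟩
    have hterm : ∀ c ∈ Bx, (c.erase x).card = k - 1 := by
      intro c hc
      obtain ⟨hcB, hxc, _⟩ := Finset.mem_filter.mp hc
      rw [Finset.card_erase_of_mem hxc, (hB _ hcB).2]
    have hcardU : (d₀.erase x).card = Bx.card * (k - 1) := by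
      rw [← hcover, Finset.card_biUnion hdisj, Finset.sum_congr rfl hterm,
        Finset.sum_const, smul_eq_mul]
    have hcardE : (d₀.erase x).card = v' - 1 := by
      rw [Finset.card_erase_of_mem hxd₀, hd₀card]
    have hinj : k ≤ Bx.card := by
      rw [← hb₀k]
      apply Finset.card_le_card_of_injOn
        (fun y => if h : ∃ c ∈ B, x ∈ c ∧ y ∈ c ∧ c ⊆ d₀ then h.choose else ∅)
      · intro y hy
        have hyd : y ∈ d₀ := hb₀d₀ hy
        have hyx : x ≠ y := by rintro rfl; exact hxb₀ hy
        have hex' : ∃ c ∈ B, x ∈ c ∧ y ∈ c ∧ c ⊆ d₀ := hd₀sub x hxd₀ y hyd hyx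
        beta_reduce
        rw [dif_pos hex']
        obtain ⟨h1, h2, _, h4⟩ := hex'.choose_spec
        exact Finset.mem_filter.mpr ⟨h1, h2, h4⟩
      · intro y hy y' hy' heq
        have hy := Finset.mem_coe.mp hy
        have hy' := Finset.mem_coe.mp hy'
        by_contra hne
        have hyx : x ≠ y := by rintro rfl; exact hxb₀ hy
        have hyx' : x ≠ y' := by rintro rfl; exact hxb₀ hy'
        have hex1 : ∃ c ∈ B, x ∈ c ∧ y ∈ c ∧ c ⊆ d₀ := hd₀sub x hxd₀ y (hb₀d₀ hy) hyx
        have hex2 : ∃ c ∈ B, x ∈ c ∧ y' ∈ c ∧ c ⊆ d₀ := hd₀sub x hxd₀ y' (hb₀d₀ hy') hyx'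
        simp only at heq
        rw [dif_pos hex1, dif_pos hex2] at heq
        obtain ⟨hc1B, hxc1, hyc1, _⟩ := hex1.choose_spec
        obtain ⟨hc2B, hxc2, hyc2, _⟩ := hex2.choose_spec
        have hcb : hex1.choose = b₀ := huniq y (hb₀V hy) y' (hb₀V hy') hne _ hc1B b₀ hb₀B
          hyc1 (heq ▸ hyc2) hy hy'
        exact hxb₀ (hcb ▸ hxc1)
    have hmul : k * (k - 1) ≤ Bx.card * (k - 1) := Nat.mul_le_mul_right _ hinj
    omega
  -- packing bound: m * (v' - k) + k ≤ v
  have hF : m * (v' - k) + k ≤ v := by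
    set S := D.filter (fun d => b₀ ⊆ d) with hS
    have hdisj : ∀ d₁ ∈ S, ∀ d₂ ∈ S, d₁ ≠ d₂ → Disjoint (d₁ \ b₀) (d₂ \ b₀) := by
      intro d₁ h1 d₂ h2 hne
      obtain ⟨h1D, h1b⟩ := Finset.mem_filter.mp h1
      obtain ⟨h2D, h2b⟩ := Finset.mem_filter.mp h2
      rw [Finset.disjoint_left]
      intro z hz1 hz2
      have hcapeq := hcap b₀ hb₀B d₁ h1D d₂ h2D hne h1b h2b
      have hz := Finset.mem_inter.mpr ⟨(Finset.mem_sdiff.mp hz1).1, (Finset.mem_sdiff.mp hz2).1⟩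
      rw [hcapeq] at hz
      exact (Finset.mem_sdiff.mp hz1).2 hz
    have hsub : S.biUnion (fun d => d \ b₀) ⊆ V \ b₀ := by
      intro z hz
      obtain ⟨d, hd, hzd⟩ := Finset.mem_biUnion.mp hz
      obtain ⟨hdD, _⟩ := Finset.mem_filter.mp hd
      exact Finset.mem_sdiff.mpr ⟨(hD d hdD).1 (Finset.mem_sdiff.mp hzd).1,
        (Finset.mem_sdiff.mp hzd).2⟩
    have hterm : ∀ d ∈ S, (d \ b₀).card = v' - k := by
      intro d hd
      obtain ⟨hdD, hbd⟩ := Finset.mem_filter.mp hd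
      rw [Finset.card_sdiff_of_subset hbd, (hD d hdD).2.1, hb₀k]
    have hcard : (S.biUnion (fun d => d \ b₀)).card = m * (v' - k) := by
      rw [Finset.card_biUnion hdisj, Finset.sum_congr rfl hterm, Finset.sum_const, smul_eq_mul,
        hS, hm b₀ hb₀B]
    have hle := Finset.card_le_card hsub
    rw [hcard, Finset.card_sdiff_of_subset hb₀V, hV, hb₀k] at hle
    have := Nat.add_le_add_right hle k
    rwa [Nat.sub_add_cancel hkv] at this
  -- number of designs through two points equals m
  have hL5 : ∀ y ∈ V, y ≠ x₁ → (D.filter fun d => x₁ ∈ d ∧ y ∈ d).card = m := by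
    intro y hyV hyx
    obtain ⟨b, hbB, hx₁b, hyb⟩ := hex x₁ hx₁V y hyV (Ne.symm hyx)
    have hfe : (D.filter fun d => x₁ ∈ d ∧ y ∈ d) = D.filter (fun d => b ⊆ d) := by
      apply Finset.filter_congr
      intro d hdD
      constructor
      · rintro ⟨h1, h2⟩
        obtain ⟨b', hb'B, h3, h4, h5⟩ := (hD d hdD).2.2 x₁ h1 y h2 (Ne.symm hyx)
        have : b = b' := huniq x₁ hx₁V y hyV (Ne.symm hyx) b hbB b' hb'B hx₁b hyb h3 h4
        exact this ▸ h5
      · intro h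
        exact ⟨h hx₁b, h hyb⟩
    rw [hfe, hm b hbB]
  -- replication equation: l * (v'-1) = (v-1) * m
  have hA : l * (v' - 1) = (v - 1) * m := by
    have key := aux_sum_comm (D.filter (fun d => x₁ ∈ d)) (V.erase x₁) (fun d y => y ∈ d)
    have lhs : ∀ d ∈ D.filter (fun d => x₁ ∈ d),
        ((V.erase x₁).filter (fun y => y ∈ d)).card = v' - 1 := by
      intro d hd
      obtain ⟨hdD, hx₁d⟩ := Finset.mem_filter.mp hd
      have hfe : (V.erase x₁).filter (fun y => y ∈ d) = d.erase x₁ := by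
        ext z
        simp only [Finset.mem_filter, Finset.mem_erase]
        constructor
        · rintro ⟨⟨h1, _⟩, h3⟩; exact ⟨h1, h3⟩
        · rintro ⟨h1, h2⟩; exact ⟨⟨h1, (hD d hdD).1 h2⟩, h2⟩
      rw [hfe, Finset.card_erase_of_mem hx₁d, (hD d hdD).2.1]
    have rhs : ∀ y ∈ V.erase x₁,
        ((D.filter (fun d => x₁ ∈ d)).filter (fun d => y ∈ d)).card = m := by
      intro y hy
      obtain ⟨hyx, hyV⟩ := Finset.mem_erase.mp hy
      rw [Finset.filter_filter]
      exact hL5 y hyV hyx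
    rw [Finset.sum_congr rfl lhs, Finset.sum_congr rfl rhs, Finset.sum_const, Finset.sum_const,
      smul_eq_mul, smul_eq_mul, hl x₁ hx₁V, Finset.card_erase_of_mem hx₁V, hV] at key
    exact key
  -- blocks through a point: r * (k-1) = v - 1
  set r := (B.filter (fun b => x₁ ∈ b)).card with hrdef
  have hRB : r * (k - 1) = v - 1 := by
    have key := aux_sum_comm (B.filter (fun b => x₁ ∈ b)) (V.erase x₁) (fun b y => y ∈ b)
    have lhs : ∀ b ∈ B.filter (fun b => x₁ ∈ b),
        ((V.erase x₁).filter (fun y => y ∈ b)).card = k - 1 := by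
      intro b hb
      obtain ⟨hbB, hx₁b⟩ := Finset.mem_filter.mp hb
      have hfe : (V.erase x₁).filter (fun y => y ∈ b) = b.erase x₁ := by
        ext z
        simp only [Finset.mem_filter, Finset.mem_erase]
        constructor
        · rintro ⟨⟨h1, _⟩, h3⟩; exact ⟨h1, h3⟩
        · rintro ⟨h1, h2⟩; exact ⟨⟨h1, (hB b hbB).1 h2⟩, h2⟩
      rw [hfe, Finset.card_erase_of_mem hx₁b, (hB b hbB).2]
    have rhs : ∀ y ∈ V.erase x₁,
        ((B.filter (fun b => x₁ ∈ b)).filter (fun b => y ∈ b)).card = 1 := by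
      intro y hy
      obtain ⟨hyx, hyV⟩ := Finset.mem_erase.mp hy
      rw [Finset.filter_filter]
      exact hpair x₁ hx₁V y hyV (Ne.symm hyx)
    rw [Finset.sum_congr rfl lhs, Finset.sum_congr rfl rhs, Finset.sum_const, Finset.sum_const,
      smul_eq_mul, smul_eq_mul, Finset.card_erase_of_mem hx₁V, hV, mul_one] at key
    exact key
  -- pair equation: l*l - l = r * (m*m - m)
  have hCeq : l * l - l = r * (m * m - m) := by
    set S₀ := D.filter (fun d => x₁ ∈ d) with hS₀
    have hmem : ∀ p ∈ S₀.offDiag, p.1 ∩ p.2 ∈ B.filter (fun b => x₁ ∈ b) := by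
      intro p hp
      obtain ⟨hp1, hp2, hpne⟩ := Finset.mem_offDiag.mp hp
      obtain ⟨h1D, h1x⟩ := Finset.mem_filter.mp hp1
      obtain ⟨h2D, h2x⟩ := Finset.mem_filter.mp hp2
      have hxmem : x₁ ∈ p.1 ∩ p.2 := Finset.mem_inter.mpr ⟨h1x, h2x⟩
      have h2le : 2 ≤ (p.1 ∩ p.2).card := by
        have hpos := Finset.card_pos.mpr ⟨x₁, hxmem⟩
        have := hno1 p.1 h1D p.2 h2D hpne
        omega
      exact Finset.mem_filter.mpr ⟨hinter p.1 h1D p.2 h2D hpne h2le, hxmem⟩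
    have key := Finset.card_eq_sum_card_fiberwise hmem
    have hfib : ∀ b ∈ B.filter (fun b => x₁ ∈ b),
        (S₀.offDiag.filter (fun p => p.1 ∩ p.2 = b)).card = m * m - m := by
      intro b hbmem
      obtain ⟨hbB, hxb⟩ := Finset.mem_filter.mp hbmem
      have hfe : S₀.offDiag.filter (fun p => p.1 ∩ p.2 = b) =
          (D.filter (fun d => b ⊆ d)).offDiag := by
        ext p
        constructor
        · intro hp
          obtain ⟨hpo, hcapb⟩ := Finset.mem_filter.mp hp
          obtain ⟨hp1, hp2, hpne⟩ := Finset.mem_offDiag.mp hpo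
          obtain ⟨h1D, _⟩ := Finset.mem_filter.mp hp1
          obtain ⟨h2D, _⟩ := Finset.mem_filter.mp hp2
          refine Finset.mem_offDiag.mpr ⟨Finset.mem_filter.mpr ⟨h1D, ?_⟩,
            Finset.mem_filter.mpr ⟨h2D, ?_⟩, hpne⟩
          · rw [← hcapb]; exact Finset.inter_subset_left
          · rw [← hcapb]; exact Finset.inter_subset_right
        · intro hp
          obtain ⟨hp1, hp2, hpne⟩ := Finset.mem_offDiag.mp hp
          obtain ⟨h1D, h1b⟩ := Finset.mem_filter.mp hp1
          obtain ⟨h2D, h2b⟩ := Finset.mem_filter.mp hp2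
          refine Finset.mem_filter.mpr ⟨Finset.mem_offDiag.mpr
            ⟨Finset.mem_filter.mpr ⟨h1D, h1b hxb⟩, Finset.mem_filter.mpr ⟨h2D, h2b hxb⟩, hpne⟩,
            hcap b hbB p.1 h1D p.2 h2D hpne h1b h2b⟩
      rw [hfe, Finset.offDiag_card, hm b hbB]
    rw [Finset.offDiag_card, hS₀, hl x₁ hx₁V, Finset.sum_congr rfl hfib, Finset.sum_const,
      smul_eq_mul] at key
    rw [key, hrdef]
  -- each design contains exactly (v'*v'-v')/(k*k-k) blocks
  have hBd : ∀ d ∈ D, (B.filter (fun b => b ⊆ d)).card * (k * k - k) = v' * v' - v' := by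
    intro d hdD
    obtain ⟨hdV, hdc, hds⟩ := hD d hdD
    have key := aux_sum_comm (B.filter (fun b => b ⊆ d)) d.offDiag (fun b p => p.1 ∈ b ∧ p.2 ∈ b)
    have lhs : ∀ b ∈ B.filter (fun b => b ⊆ d),
        (d.offDiag.filter (fun p => p.1 ∈ b ∧ p.2 ∈ b)).card = k * k - k := by
      intro b hb
      obtain ⟨hbB, hbd⟩ := Finset.mem_filter.mp hb
      have hfe : d.offDiag.filter (fun p => p.1 ∈ b ∧ p.2 ∈ b) = b.offDiag := by
        ext p
        simp only [Finset.mem_filter, Finset.mem_offDiag]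
        constructor
        · rintro ⟨⟨_, _, hpne⟩, h1, h2⟩; exact ⟨h1, h2, hpne⟩
        · rintro ⟨h1, h2, hpne⟩; exact ⟨⟨hbd h1, hbd h2, hpne⟩, h1, h2⟩
      rw [hfe, Finset.offDiag_card, (hB b hbB).2]
    have rhs : ∀ p ∈ d.offDiag,
        ((B.filter (fun b => b ⊆ d)).filter (fun b => p.1 ∈ b ∧ p.2 ∈ b)).card = 1 := by
      intro p hp
      obtain ⟨hp1, hp2, hpne⟩ := Finset.mem_offDiag.mp hp
      obtain ⟨b, hbB, h3, h4, h5⟩ := hds p.1 hp1 p.2 hp2 hpne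
      rw [Finset.card_eq_one]
      refine ⟨b, ?_⟩
      ext c
      simp only [Finset.mem_singleton, Finset.mem_filter]
      constructor
      · rintro ⟨⟨hcB, _⟩, hc1, hc2⟩
        exact huniq p.1 (hdV hp1) p.2 (hdV hp2) hpne c hcB b hbB hc1 hc2 h3 h4
      · rintro rfl
        exact ⟨⟨hbB, h5⟩, h3, h4⟩
    rw [Finset.sum_congr rfl lhs, Finset.sum_congr rfl rhs, Finset.sum_const, Finset.sum_const,
      smul_eq_mul, smul_eq_mul, mul_one, Finset.offDiag_card, hdc] at key
    exact key
  -- global double count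
  have hglob : D.card * (v' * v' - v') = B.card * (m * (k * k - k)) := by
    have key := aux_sum_comm D B (fun d b => b ⊆ d)
    rw [Finset.sum_congr rfl hm, Finset.sum_const, smul_eq_mul] at key
    calc D.card * (v' * v' - v') = ∑ _d ∈ D, (v' * v' - v') := by
          rw [Finset.sum_const, smul_eq_mul]
      _ = ∑ d ∈ D, (B.filter (fun b => b ⊆ d)).card * (k * k - k) :=
          Finset.sum_congr rfl (fun d hd => (hBd d hd).symm)
      _ = (∑ d ∈ D, (B.filter (fun b => b ⊆ d)).card) * (k * k - k) := by
          rw [Finset.sum_mul]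
      _ = B.card * m * (k * k - k) := by rw [key]
      _ = B.card * (m * (k * k - k)) := by ring
  -- arithmetic conclusion
  have hsq : ∀ n : ℕ, n ≤ n * n := by
    intro n
    rcases Nat.eq_zero_or_pos n with h | h
    · simp [h]
    · exact Nat.le_mul_of_pos_left n h
  have hll : l ≤ l * l := hsq l
  have hmm : m ≤ m * m := hsq m
  have hkk : k ≤ k * k := hsq k
  have hvv : v' ≤ v' * v' := hsq v'
  have hZ : (m : ℤ) * ((k : ℤ) * ((k : ℤ) - 1)) < (v' : ℤ) * ((v' : ℤ) - 1) := by
    apply aux_arith (k : ℤ) (v' : ℤ) (m : ℤ) (v : ℤ) (l : ℤ) (r : ℤ)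
    · exact_mod_cast hk
    · exact_mod_cast hk'
    · exact_mod_cast hm1
    · zify [show 1 ≤ k by omega] at hfisher
      linarith
    · zify [show k ≤ v' by omega] at hF
      linarith
    · zify [show 1 ≤ v' by omega, show 1 ≤ v by omega] at hA
      linarith
    · zify [show 1 ≤ k by omega, show 1 ≤ v by omega] at hRB
      linarith
    · zify [hll, hmm] at hCeq
      linarith
  have hN : m * (k * k - k) < v' * v' - v' := by
    zify [hkk, hvv]
    linarith [hZ]
  have hfin : D.card * (v' * v' - v') < B.card * (v' * v' - v') := by
    rw [hglob]
    exact Nat.mul_lt_mul_of_le_of_lt (le_refl B.card) hN (Finset.card_pos.mpr hBne)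
  exact Nat.lt_of_mul_lt_mul_right hfin
end
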